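/- arXiv:2003.13281 — 7 statements merged into one kernel-verified Lean document; each statement's English description precedes it below -/
import Mathlib

section
/- Let p be a prime. Every finite 2-generated p-group of nilpotency class exactly 2 is isomorphic to G_p(m,n1,n2,s1,s2) for some admissible tuple (m,n1,n2,s1,s2). -/
/-- The set of relators for the presented group `G_p(m,n1,n2,s1,s2)` on two generators
`b1, b2`, with `a = [b2,b1] = b2⁻¹ * b1⁻¹ * b2 * b1`:
`a ^ p^m = 1`, `[b1,a] = 1`, `[b2,a] = 1`, `b1 ^ p^n1 = a ^ p^s1`, `b2 ^ p^n2 = a ^ p^s2`. -/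
def pgRels (p m n1 n2 s1 s2 : ℕ) : Set (FreeGroup (Fin 2)) :=
  let b1 : FreeGroup (Fin 2) := FreeGroup.of 0
  let b2 : FreeGroup (Fin 2) := FreeGroup.of 1
  let a : FreeGroup (Fin 2) := b2⁻¹ * b1⁻¹ * b2 * b1
  {a ^ p ^ m,
   b1⁻¹ * a⁻¹ * b1 * a,
   b2⁻¹ * a⁻¹ * b2 * a,
   b1 ^ p ^ n1 * (a ^ p ^ s1)⁻¹,
   b2 ^ p ^ n2 * (a ^ p ^ s2)⁻¹}

/-- The group `G_p(m,n1,n2,s1,s2)` given by the presentation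
`⟨b1, b2 ∣ [b2,b1]^(p^m) = [b1,[b2,b1]] = [b2,[b2,b1]] = 1,
  b1^(p^n1) = [b2,b1]^(p^s1), b2^(p^n2) = [b2,b1]^(p^s2)⟩`. -/
abbrev GG (p m n1 n2 s1 s2 : ℕ) : Type := PresentedGroup (pgRels p m n1 n2 s1 s2)

/-- A tuple `(m,n1,n2,s1,s2)` is admissible for the prime `p` if:
(A1) `0 < m` and `s1 ≤ m`, `s2 ≤ m ≤ n2 ≤ n1`;
(A2) `n1 - s1 ≥ n2 - s2` (stated without truncated subtraction);
(A3) if `p = 2` then `s1 < n1`;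
(A4) either `s1 ≥ s2`, or `p = 2` and `n1 = n2 = m = s2 = s1 + 1`. -/
def Admissible (p m n1 n2 s1 s2 : ℕ) : Prop :=
  (0 < m ∧ s1 ≤ m ∧ s2 ≤ m ∧ m ≤ n2 ∧ n2 ≤ n1) ∧
  n2 + s1 ≤ n1 + s2 ∧
  (p = 2 → s1 < n1) ∧
  (s2 ≤ s1 ∨ (p = 2 ∧ n1 = n2 ∧ n2 = m ∧ m = s2 ∧ s2 = s1 + 1))

/-!
In class two the commutator is bimultiplicative, so for any generators `x, y` of `G` the derived
subgroup `G'` is cyclic, generated by `c = ⁅y, x⁆`, of order `p ^ m` say. Choosing `x, y` to lift a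
basis of the abelian `p`-group `G ⧸ G'`, of type `(p ^ n1, p ^ n2)`, gives `|G| = p ^ (n1 + n2 + m)`
and `x ^ p ^ n1 = c ^ (u * p ^ a)`, `y ^ p ^ n2 = c ^ (w * p ^ b)` with `u, w` prime to `p`. The
substitutions `x ↦ x * y`, `y ↦ y * x ^ p ^ (n1 - n2)` and, if `n1 = n2`, `x ↔ y` move `(a, b)` into
an admissible position; by Hall's formula `(x * y) ^ n = x ^ n * y ^ n * c ^ (n.choose 2)` the
correction term is trivial unless `p = 2` and `n1 = m`, which is where the exceptional tuples come
from. Replacing `x, y` by `x ^ w, y ^ u` then gives the relations of `G_p(m, n1, n2, a, b)` exactly,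
and since that group has order at most `p ^ (n1 + n2 + m)`, the surjection onto `G` is an
isomorphism.
-/

open Subgroup
open scoped commutatorElement

lemma closure_pair_eq_top_of_mem {G : Type*} [Group G] {x y x' y' : G} (h : closure {x, y} = ⊤)
    (hx : x ∈ closure {x', y'}) (hy : y ∈ closure {x', y'}) : closure {x', y'} = ⊤ :=
  eq_top_iff.mpr <| h ▸ (closure_le _).mpr
    (Set.insert_subset_iff.mpr ⟨hx, Set.singleton_subset_iff.mpr hy⟩)

lemma closure_pair_map_eq_top {G H : Type*} [Group G] [Group H] {f : G →* H}
    (hf : Function.Surjective f) {x y : G} (h : closure {x, y} = ⊤) :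
    closure {f x, f y} = ⊤ := by
  rw [← Set.image_pair, ← MonoidHom.map_closure, h, map_top_of_surjective f hf]

lemma apply_mem_of_closure_pair_sup_eq_top {G H : Type*} [Group G] [Group H] {x y : G}
    {N : Subgroup G} (hgen : closure {x, y} ⊔ N = ⊤) (φ : G →* H) {K : Subgroup H}
    (hx : φ x ∈ K) (hy : φ y ∈ K) (hN : ∀ z ∈ N, φ z = 1) (g : G) : φ g ∈ K := by
  have : closure {x, y} ⊔ N ≤ K.comap φ := sup_le
    ((closure_le _).mpr (Set.insert_subset_iff.mpr ⟨hx, Set.singleton_subset_iff.mpr hy⟩))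
    fun z hz ↦ by simp [hN z hz]
  exact this (hgen ▸ mem_top g)

section ClassTwo

variable {G : Type*} [Group G] (hcl : commutator G ≤ center G)
include hcl

lemma commute_commutatorElement (g h k : G) : Commute ⁅g, h⁆ k :=
  (mem_center_iff.mp (hcl (commutator_mem_commutator (mem_top g) (mem_top h))) k).symm

lemma commutatorElement_eq_one_of_mem_commutator {z : G} (hz : z ∈ commutator G) (g : G) :
    ⁅z, g⁆ = 1 ∧ ⁅g, z⁆ = 1 := by
  have hzg : Commute z g := (mem_center_iff.mp (hcl hz) g).symm
  exact ⟨commutatorElement_eq_one_iff_commute.mpr hzg,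
    commutatorElement_eq_one_iff_commute.mpr hzg.symm⟩

lemma commutatorElement_mul_left (a b h : G) : ⁅a * b, h⁆ = ⁅a, h⁆ * ⁅b, h⁆ := by
  rw [commutatorElement_mul_left_eq_conj_mul, ← (commute_commutatorElement hcl b h a).eq,
    mul_inv_cancel_right, (commute_commutatorElement hcl b h _).eq]

lemma commutatorElement_mul_right (g a b : G) : ⁅g, a * b⁆ = ⁅g, a⁆ * ⁅g, b⁆ := by
  rw [commutatorElement_mul_right_eq_mul_conj, mul_assoc _ a,
    ← (commute_commutatorElement hcl g b a).eq, ← mul_assoc, mul_inv_cancel_right]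

lemma commutatorElement_zpow_zpow (g h : G) (i j : ℤ) : ⁅g ^ i, h ^ j⁆ = ⁅g, h⁆ ^ (i * j) := by
  have hl := map_zpow (MonoidHom.mk' (fun g ↦ ⁅g, h ^ j⁆)
    (commutatorElement_mul_left hcl · · _)) g i
  have hr := map_zpow (MonoidHom.mk' (fun h ↦ ⁅g, h⁆) (commutatorElement_mul_right hcl g)) h j
  simp only [MonoidHom.mk'_apply] at hl hr
  rw [hl, hr, ← zpow_mul, mul_comm]

lemma commutatorElement_pow_pow (g h : G) (i j : ℕ) : ⁅g ^ i, h ^ j⁆ = ⁅g, h⁆ ^ (i * j) := by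
  have := commutatorElement_zpow_zpow hcl g h i j
  rwa [zpow_natCast, zpow_natCast, ← Nat.cast_mul, zpow_natCast] at this

lemma commutatorElement_inv_inv (g h : G) : ⁅g⁻¹, h⁻¹⁆ = ⁅g, h⁆ := by
  simpa using commutatorElement_zpow_zpow hcl g h (-1) (-1)

lemma pow_mul_eq_mul_pow_mul_commutatorElement (y x : G) (n : ℕ) :
    y ^ n * x = x * y ^ n * ⁅y, x⁆ ^ n := by
  have h := commutatorElement_pow_pow hcl y x n 1
  simp only [pow_one, mul_one] at h
  rw [← h, ← (commute_commutatorElement hcl _ _ _).eq, commutatorElement_def]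
  group

lemma mul_pow_eq_pow_mul_pow_mul_commutatorElement (x y : G) (n : ℕ) :
    (x * y) ^ n = x ^ n * y ^ n * ⁅y, x⁆ ^ n.choose 2 := by
  induction n with
  | zero => simp
  | succ n ih =>
    have hc := commute_commutatorElement hcl y x
    calc (x * y) ^ (n + 1) = x ^ n * y ^ n * ⁅y, x⁆ ^ n.choose 2 * (x * y) := by
          rw [pow_succ, ih]
      _ = x ^ n * (y ^ n * x) * y * ⁅y, x⁆ ^ n.choose 2 := by
        rw [mul_assoc _ (⁅y, x⁆ ^ _), ((hc _).pow_left _).eq]; simp only [mul_assoc]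
      _ = x ^ n * x * (y ^ n * (⁅y, x⁆ ^ n * y)) * ⁅y, x⁆ ^ n.choose 2 := by
        rw [pow_mul_eq_mul_pow_mul_commutatorElement hcl y x n]; simp only [mul_assoc]
      _ = x ^ (n + 1) * y ^ (n + 1) * ⁅y, x⁆ ^ (n + 1).choose 2 := by
        rw [((hc y).pow_left n).eq, pow_succ x, pow_succ y, Nat.choose_succ_succ,
          Nat.choose_one_right, pow_add]
        simp only [mul_assoc]

section Generation

variable {x y : G} (hgen : closure {x, y} ⊔ commutator G = ⊤)
include hgen

lemma commutatorElement_mem_zpowers (g h : G) : ⁅g, h⁆ ∈ zpowers ⁅y, x⁆ := by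
  have hcen : ∀ a : G, ∀ z ∈ commutator G, ⁅a, z⁆ = 1 ∧ ⁅z, a⁆ = 1 := fun a z hz ↦
    (commutatorElement_eq_one_of_mem_commutator hcl hz a).symm
  have hx : ∀ h, ⁅x, h⁆ ∈ zpowers ⁅y, x⁆ :=
    apply_mem_of_closure_pair_sup_eq_top hgen
      (MonoidHom.mk' (fun h ↦ ⁅x, h⁆) (commutatorElement_mul_right hcl x))
      (show ⁅x, x⁆ ∈ _ from commutatorElement_self x ▸ one_mem _)
      (show ⁅x, y⁆ ∈ _ from commutatorElement_inv y x ▸ inv_mem (mem_zpowers _))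
      fun z hz ↦ (hcen x z hz).1
  have hy : ∀ h, ⁅y, h⁆ ∈ zpowers ⁅y, x⁆ :=
    apply_mem_of_closure_pair_sup_eq_top hgen
      (MonoidHom.mk' (fun h ↦ ⁅y, h⁆) (commutatorElement_mul_right hcl y))
      (mem_zpowers _) (show ⁅y, y⁆ ∈ _ from commutatorElement_self y ▸ one_mem _)
      fun z hz ↦ (hcen y z hz).1
  exact apply_mem_of_closure_pair_sup_eq_top hgen
    (MonoidHom.mk' (fun g ↦ ⁅g, h⁆) (commutatorElement_mul_left hcl · · h))
    (hx h) (hy h) (fun z hz ↦ (hcen h z hz).2) g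

lemma commutator_eq_zpowers : commutator G = zpowers ⁅y, x⁆ :=
  le_antisymm (commutator_def G ▸ commutator_le.mpr fun g _ h _ ↦
      commutatorElement_mem_zpowers hcl hgen g h)
    (zpowers_le.mpr (commutator_mem_commutator (mem_top y) (mem_top x)))

lemma closure_pair_eq_top_of_sup_commutator : closure {x, y} = ⊤ := by
  have hx : x ∈ closure {x, y} := subset_closure (by simp)
  have hy : y ∈ closure {x, y} := subset_closure (by simp)
  have hyx : ⁅y, x⁆ ∈ closure {x, y} := by
    rw [commutatorElement_def]
    exact mul_mem (mul_mem (mul_mem hy hx) (inv_mem hy)) (inv_mem hx)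
  rwa [commutator_eq_zpowers hcl hgen, sup_eq_left.mpr (zpowers_le.mpr hyx)] at hgen

end Generation

end ClassTwo

lemma exists_closure_pair_eq_top_orderOf_mul_le {A : Type*} [CommGroup A] [Finite A] {a b : A}
    (hgen : closure {a, b} = ⊤) (hba : orderOf b ∣ orderOf a) :
    ∃ v, closure {a, v} = ⊤ ∧ orderOf v ∣ orderOf a ∧ orderOf a * orderOf v ≤ Nat.card A := by
  -- `v = b * a ^ (-t)`, where `k` is the order of `b` modulo `⟨a⟩` and `b ^ k = a ^ (k * t)`.
  set q := QuotientGroup.mk' (zpowers a)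
  set k := orderOf (q b)
  obtain ⟨r, hr⟩ : k ∣ orderOf b := orderOf_map_dvd q b
  obtain ⟨i, hi⟩ : ∃ i : ℤ, a ^ i = b ^ k := by
    have : q (b ^ k) = 1 := by rw [map_pow, pow_orderOf_eq_one]
    exact mem_zpowers_iff.mp ((QuotientGroup.eq_one_iff _).mp this)
  obtain ⟨t, rfl⟩ : (k : ℤ) ∣ i := by
    have hr0 : (r : ℤ) ≠ 0 := by
      have := (orderOf_pos b).ne'
      rw [hr] at this
      exact_mod_cast right_ne_zero_of_mul this
    have h1 : a ^ (i * r) = 1 := by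
      rw [zpow_mul, hi, ← zpow_natCast, ← zpow_mul, ← Nat.cast_mul, ← hr, zpow_natCast,
        pow_orderOf_eq_one]
    have h2 : ((k * r : ℕ) : ℤ) ∣ i * r :=
      (Int.natCast_dvd_natCast.mpr (hr ▸ hba)).trans (orderOf_dvd_iff_zpow_eq_one.mpr h1)
    push_cast at h2
    exact Int.dvd_of_mul_dvd_mul_right hr0 h2
  have hv : (b * a ^ (-t)) ^ k = 1 := by
    rw [mul_pow, ← zpow_natCast (a ^ (-t)), ← zpow_mul, ← hi, ← zpow_add, neg_mul, mul_comm,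
      add_neg_cancel, zpow_zero]
  have hvk : orderOf (b * a ^ (-t)) ∣ k := orderOf_dvd_of_pow_eq_one hv
  refine ⟨b * a ^ (-t), ?_, hvk.trans ((Dvd.intro r hr.symm).trans hba), ?_⟩
  · have hb : b = b * a ^ (-t) * a ^ t := by group
    refine closure_pair_eq_top_of_mem hgen (subset_closure (by simp)) (hb ▸ ?_)
    exact mul_mem (subset_closure (by simp)) (zpow_mem (subset_closure (by simp)) t)
  · rw [card_eq_card_quotient_mul_card_subgroup (zpowers a), Nat.card_zpowers, mul_comm]
    exact Nat.mul_le_mul_right _ ((Nat.le_of_dvd (orderOf_pos _) hvk).trans orderOf_le_card)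

lemma IsPGroup.exists_closure_pair_eq_top_card_le {A : Type*} [CommGroup A] [Finite A] {p : ℕ}
    (hp : p.Prime) (hA : IsPGroup p A) {a b : A} (hgen : closure {a, b} = ⊤) :
    ∃ (n1 n2 : ℕ) (u v : A), closure {u, v} = ⊤ ∧ orderOf u = p ^ n1 ∧ orderOf v = p ^ n2 ∧
      n2 ≤ n1 ∧ p ^ n1 * p ^ n2 ≤ Nat.card A := by
  have := Fact.mk hp
  obtain ⟨u, v, hgen', hvu, hcard⟩ : ∃ u v : A, closure {u, v} = ⊤ ∧
      orderOf v ∣ orderOf u ∧ orderOf u * orderOf v ≤ Nat.card A := by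
    obtain ⟨i, hi⟩ := IsPGroup.iff_orderOf.mp hA a
    obtain ⟨j, hj⟩ := IsPGroup.iff_orderOf.mp hA b
    rcases le_total j i with hji | hij
    · obtain ⟨v, hv⟩ := exists_closure_pair_eq_top_orderOf_mul_le hgen
        (by rw [hi, hj]; exact pow_dvd_pow p hji)
      exact ⟨_, v, hv⟩
    · obtain ⟨v, hv⟩ := exists_closure_pair_eq_top_orderOf_mul_le (Set.pair_comm a b ▸ hgen)
        (by rw [hi, hj]; exact pow_dvd_pow p hij)
      exact ⟨_, v, hv⟩
  obtain ⟨n1, hn1⟩ := IsPGroup.iff_orderOf.mp hA u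
  obtain ⟨n2, hn2⟩ := IsPGroup.iff_orderOf.mp hA v
  refine ⟨n1, n2, u, v, hgen', hn1, hn2, ?_, hn1 ▸ hn2 ▸ hcard⟩
  exact (Nat.pow_dvd_pow_iff_le_right hp.one_lt).mp (hn1 ▸ hn2 ▸ hvu)

lemma Nat.choose_two_two_pow {n : ℕ} (hn : 1 ≤ n) :
    (2 ^ n).choose 2 = 2 ^ (n - 1) * (2 ^ n - 1) := by
  obtain ⟨k, rfl⟩ : ∃ k, n = k + 1 := ⟨n - 1, by omega⟩
  rw [Nat.choose_two_right, Nat.add_sub_cancel, pow_succ, mul_comm (2 ^ k) 2, mul_assoc,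
    Nat.mul_div_cancel_left _ two_pos]

lemma Nat.pow_dvd_pow_mul_choose_two {p m d n : ℕ} (hp : p.Prime) (hn : 1 ≤ n) (hm : m ≤ d + n)
    (h2 : p = 2 → m < d + n) : p ^ m ∣ p ^ d * (p ^ n).choose 2 := by
  rcases eq_or_ne p 2 with rfl | hp2
  · rw [Nat.choose_two_two_pow hn, ← mul_assoc, ← pow_add]
    exact dvd_mul_of_dvd_left (pow_dvd_pow 2 (by have := h2 rfl; omega)) _
  · have heven : 2 ∣ p ^ n - 1 :=
      (Nat.Odd.sub_odd (hp.odd_of_ne_two hp2).pow odd_one).two_dvd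
    rw [Nat.choose_two_right, Nat.mul_div_assoc _ heven, ← mul_assoc, ← pow_add]
    exact dvd_mul_of_dvd_left (pow_dvd_pow p hm) _

section Level

variable {G : Type*} [Group G] {p : ℕ} {c z w : G} {a b : ℕ}

/-- `z = c ^ (u * p ^ a)` with `u` prime to `p`. If `c` has order `p ^ m` and `a ≤ m`, then `z` has
order `p ^ (m - a)`. -/
def HasLevel (p : ℕ) (c z : G) (a : ℕ) : Prop :=
  ∃ u : ℤ, ¬ (p : ℤ) ∣ u ∧ z = c ^ (u * (p : ℤ) ^ a)

lemma HasLevel.mul_of_lt (hz : HasLevel p c z a) (hw : HasLevel p c w b) (hab : a < b) :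
    HasLevel p c (z * w) a := by
  obtain ⟨u, hu, rfl⟩ := hz
  obtain ⟨v, -, rfl⟩ := hw
  refine ⟨u + v * p ^ (b - a), fun h ↦ hu ?_, ?_⟩
  · exact (dvd_add_left (dvd_mul_of_dvd_right (dvd_pow_self _ (by omega)) _)).mp h
  · rw [← zpow_add, add_mul, mul_assoc, ← pow_add, Nat.sub_add_cancel hab.le]

lemma HasLevel.mul_of_gt (hz : HasLevel p c z a) (hw : HasLevel p c w b) (hba : b < a) :
    HasLevel p c (z * w) b := by
  obtain ⟨u, hu, rfl⟩ := hz
  obtain ⟨v, hv, rfl⟩ := hw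
  rw [(Commute.zpow_zpow_self c _ _).eq]
  exact HasLevel.mul_of_lt ⟨v, hv, rfl⟩ ⟨u, hu, rfl⟩ hba

lemma HasLevel.inv (hz : HasLevel p c z a) : HasLevel p c z⁻¹ a := by
  obtain ⟨u, hu, rfl⟩ := hz
  exact ⟨-u, by rwa [Int.dvd_neg], by rw [neg_mul, zpow_neg]⟩

lemma HasLevel.of_inv (hz : HasLevel p c z a) : HasLevel p c⁻¹ z a := by
  obtain ⟨u, hu, rfl⟩ := hz
  exact ⟨-u, by rwa [Int.dvd_neg], by rw [neg_mul, zpow_neg, inv_zpow, inv_inv]⟩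

lemma HasLevel.pow_prime_pow (hz : HasLevel p c z a) (e : ℕ) :
    HasLevel p c (z ^ p ^ e) (a + e) := by
  obtain ⟨u, hu, rfl⟩ := hz
  exact ⟨u, hu, by rw [← zpow_natCast, ← zpow_mul, pow_add, mul_assoc, Nat.cast_pow]⟩

lemma HasLevel.eq_one {m : ℕ} (hz : HasLevel p c z m) (hc : c ^ p ^ m = 1) : z = 1 := by
  obtain ⟨u, -, rfl⟩ := hz
  rw [mul_comm, zpow_mul, ← Nat.cast_pow, zpow_natCast, hc, one_zpow]

lemma exists_hasLevel {m : ℕ} (hp : 1 < p) (hc : c ^ p ^ m = 1) (hz : z ∈ zpowers c) :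
    ∃ a ≤ m, HasLevel p c z a := by
  have hfin : IsOfFinOrder c := isOfFinOrder_iff_pow_eq_one.mpr ⟨_, pow_pos (by omega) m, hc⟩
  obtain ⟨k, rfl⟩ : ∃ k : ℕ, c ^ k = z := hfin.mem_powers_iff_mem_zpowers.mpr hz
  by_cases hk : p ^ m ∣ k
  · obtain ⟨j, rfl⟩ := hk
    refine ⟨m, le_rfl, 1, by exact_mod_cast (Nat.dvd_one.not.mpr hp.ne'), ?_⟩
    rw [pow_mul, hc, one_pow, one_mul, ← Nat.cast_pow, zpow_natCast, hc]
  · obtain ⟨e, k', hk', rfl⟩ := Nat.exists_eq_pow_mul_and_not_dvd (n := k)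
      (fun h ↦ hk (h ▸ dvd_zero _)) p hp.ne'
    have he : e < m := by
      by_contra! h
      exact hk (dvd_mul_of_dvd_left (pow_dvd_pow p h) _)
    exact ⟨e, he.le, k', by exact_mod_cast hk', by rw [mul_comm, ← zpow_natCast]; push_cast; rfl⟩

lemma hasLevel_pow_choose_two {m : ℕ} (hm : 1 ≤ m) (c : G) :
    HasLevel 2 c (c ^ (2 ^ m).choose 2) (m - 1) := by
  refine ⟨2 ^ m - 1, ?_, ?_⟩
  · rw [Nat.cast_ofNat, ← even_iff_two_dvd, Int.not_even_iff_odd]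
    exact (even_two.pow_of_ne_zero (by omega)).sub_odd odd_one
  · rw [Nat.choose_two_two_pow hm, ← zpow_natCast]
    push_cast [Nat.one_le_two_pow]
    ring_nf

end Level

section Normalization

variable {G : Type*} [Group G] {p m n1 n2 : ℕ} {x y : G} {a b : ℕ}

def IsLevelPair (p n1 n2 : ℕ) (x y : G) (a b : ℕ) : Prop :=
  closure {x, y} = ⊤ ∧ HasLevel p ⁅y, x⁆ (x ^ p ^ n1) a ∧ HasLevel p ⁅y, x⁆ (y ^ p ^ n2) b

lemma IsLevelPair.swap {n : ℕ} (h : IsLevelPair p n n x y a b) : IsLevelPair p n n y x b a := by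
  obtain ⟨hgen, ha, hb⟩ := h
  refine ⟨Set.pair_comm x y ▸ hgen, ?_, ?_⟩ <;> rw [← commutatorElement_inv]
  exacts [hb.of_inv, ha.of_inv]

variable (hcl : commutator G ≤ center G)
include hcl

lemma IsLevelPair.mul_right (h : IsLevelPair p n1 n2 x y a b) {e : ℕ}
    (he : HasLevel p ⁅y, x⁆ (x ^ p ^ n1 * y ^ p ^ n1 * ⁅y, x⁆ ^ (p ^ n1).choose 2) e) :
    IsLevelPair p n1 n2 (x * y) y e b := by
  obtain ⟨hgen, -, hb⟩ := h
  have hc : ⁅y, x * y⁆ = ⁅y, x⁆ := by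
    rw [commutatorElement_mul_right hcl, commutatorElement_self, mul_one]
  have hx : x = x * y * y⁻¹ := by group
  refine ⟨closure_pair_eq_top_of_mem hgen (hx ▸ ?_) (subset_closure (by simp)), ?_, hc ▸ hb⟩
  · exact mul_mem (subset_closure (by simp)) (inv_mem (subset_closure (by simp)))
  · rwa [hc, mul_pow_eq_pow_mul_pow_mul_commutatorElement hcl]

lemma IsLevelPair.mul_pow_left (h : IsLevelPair p n1 n2 x y a b) (k : ℕ) {e : ℕ}
    (he : HasLevel p ⁅y, x⁆
      (y ^ p ^ n2 * x ^ (k * p ^ n2) * (⁅y, x⁆ ^ (k * (p ^ n2).choose 2))⁻¹) e) :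
    IsLevelPair p n1 n2 x (y * x ^ k) a e := by
  obtain ⟨hgen, ha, -⟩ := h
  have hc : ⁅y * x ^ k, x⁆ = ⁅y, x⁆ := by
    rw [commutatorElement_mul_left hcl, commutatorElement_eq_one_iff_commute.mpr
      ((Commute.refl x).pow_left k), mul_one]
  have hy : y = y * x ^ k * (x ^ k)⁻¹ := by group
  refine ⟨closure_pair_eq_top_of_mem hgen (subset_closure (by simp)) (hy ▸ ?_), hc ▸ ha, ?_⟩
  · exact mul_mem (subset_closure (by simp)) (inv_mem (pow_mem (subset_closure (by simp)) k))
  · have hxy : ⁅x ^ k, y⁆ = (⁅y, x⁆ ^ k)⁻¹ := by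
      rw [← pow_one y, commutatorElement_pow_pow hcl, mul_one, pow_one, ← commutatorElement_inv,
        inv_pow]
    rwa [hc, mul_pow_eq_pow_mul_pow_mul_commutatorElement hcl, ← pow_mul, hxy, inv_pow, ← pow_mul]

lemma IsLevelPair.exists_admissible_of_not_exceptional (hp : p.Prime) (hc : ⁅y, x⁆ ^ p ^ m = 1)
    (hm : 0 < m) (hmn : m ≤ n2) (hn : n2 ≤ n1) (hexc : p = 2 → m < n1)
    (h : IsLevelPair p n1 n2 x y a b) (ha : a ≤ m) (hb : b ≤ m) :
    ∃ (x' y' : G) (s1 s2 : ℕ), Admissible p m n1 n2 s1 s2 ∧ IsLevelPair p n1 n2 x' y' s1 s2 := by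
  have hchoose : ∀ d n, d + n = n1 → m ≤ n → ⁅y, x⁆ ^ (p ^ d * (p ^ n).choose 2) = 1 :=
      fun d n hdn hmn ↦ by
    obtain ⟨j, hj⟩ := Nat.pow_dvd_pow_mul_choose_two hp (m := m) (d := d) (n := n) (by omega)
      (by omega) (by omega)
    rw [hj, pow_mul, hc, one_pow]
  have hn1 : p ^ n1 = p ^ (n1 - n2) * p ^ n2 := by rw [← pow_add, Nat.sub_add_cancel hn]
  rcases lt_or_ge a b with hab | hba
  · refine ⟨x, y * x ^ p ^ (n1 - n2), a, a, by unfold Admissible; omega,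
      h.mul_pow_left hcl _ ?_⟩
    rw [hchoose _ _ (Nat.sub_add_cancel hn) hmn, inv_one, mul_one, ← hn1]
    exact h.2.2.mul_of_gt h.2.1 hab
  rcases le_or_gt a (b + (n1 - n2)) with hle | hlt
  · exact ⟨x, y, a, b, by unfold Admissible; omega, h⟩
  · refine ⟨x * y, y, b + (n1 - n2), b, by unfold Admissible; omega, h.mul_right hcl ?_⟩
    rw [← one_mul ((p ^ n1).choose 2), ← pow_zero p, hchoose _ _ (zero_add n1) (by omega),
      mul_one, show y ^ p ^ n1 = _ by rw [hn1, pow_mul']]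
    exact h.2.1.mul_of_gt (h.2.2.pow_prime_pow _) hlt

lemma IsLevelPair.exists_admissible_two_of_le (hc : ⁅y, x⁆ ^ 2 ^ m = 1) (hm : 0 < m)
    (h : IsLevelPair 2 m m x y a b) (ha : a ≤ m) (hab : a ≤ b) (hb : b ≤ m) :
    ∃ (x' y' : G) (s1 s2 : ℕ), Admissible 2 m m m s1 s2 ∧ IsLevelPair 2 m m x' y' s1 s2 := by
  -- Only `a = b < m` and `(a, b) = (m - 1, m)` are admissible here.
  have hC := hasLevel_pow_choose_two hm ⁅y, x⁆
  rcases eq_or_lt_of_le hab with rfl | hab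
  · rcases lt_or_eq_of_le ha with ha | rfl
    · exact ⟨x, y, a, a, by unfold Admissible; omega, h⟩
    · refine ⟨x * y, y, a - 1, a, by unfold Admissible; omega, h.mul_right hcl ?_⟩
      rwa [h.2.1.eq_one hc, h.2.2.eq_one hc, one_mul, one_mul]
  by_cases ham : a + 1 = m
  · exact ⟨x, y, a, b, by unfold Admissible; omega, h⟩
  · refine ⟨x, y * x ^ 1, a, a, by unfold Admissible; omega, h.mul_pow_left hcl 1 ?_⟩
    rw [one_mul, one_mul]
    exact (h.2.2.mul_of_gt h.2.1 hab).mul_of_lt hC.inv (by omega)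

lemma IsLevelPair.exists_admissible (hp : p.Prime) (hc : ⁅y, x⁆ ^ p ^ m = 1) (hm : 0 < m)
    (hmn : m ≤ n2) (hn : n2 ≤ n1) (h : IsLevelPair p n1 n2 x y a b) (ha : a ≤ m) (hb : b ≤ m) :
    ∃ (x' y' : G) (s1 s2 : ℕ), Admissible p m n1 n2 s1 s2 ∧ IsLevelPair p n1 n2 x' y' s1 s2 := by
  by_cases hexc : p = 2 ∧ n1 = m
  · obtain ⟨rfl, hn1⟩ := hexc
    obtain rfl : n2 = m := by omega
    subst hn1
    rcases le_total a b with hab | hba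
    · exact h.exists_admissible_two_of_le hcl hc hm ha hab hb
    · exact h.swap.exists_admissible_two_of_le hcl
        (by rw [← commutatorElement_inv, inv_pow, hc, inv_one]) hm hb hba ha
  · exact h.exists_admissible_of_not_exceptional hcl hp hc hm hmn hn (by omega) ha hb

lemma IsLevelPair.exists_eq_commutatorElement_pow (hp : p.Prime) (hGp : IsPGroup p G)
    (h : IsLevelPair p n1 n2 x y a b) : ∃ x' y' : G, closure {x', y'} = ⊤ ∧
      x' ^ p ^ n1 = ⁅y', x'⁆ ^ p ^ a ∧ y' ^ p ^ n2 = ⁅y', x'⁆ ^ p ^ b := by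
  obtain ⟨hgen, ⟨u, hu, hx⟩, ⟨w, hw, hy⟩⟩ := h
  have hmem : ∀ (g : G) (k : ℤ), ¬ (p : ℤ) ∣ k → g ∈ zpowers (g ^ k) := fun g k hk ↦
    mem_zpowers_zpow_iff.mpr (by simpa [Int.gcd] using (hGp.orderOf_coprime
      ((Nat.Prime.coprime_iff_not_dvd hp).mpr fun h ↦ hk (Int.natCast_dvd.mpr h)) g).symm)
  refine ⟨x ^ w, y ^ u, closure_pair_eq_top_of_mem hgen
    (zpowers_le.mpr (subset_closure (by simp)) (hmem x w hw))
    (zpowers_le.mpr (subset_closure (by simp)) (hmem y u hu)), ?_, ?_⟩ <;>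
  rw [commutatorElement_zpow_zpow hcl, ← zpow_natCast, ← zpow_mul, mul_comm, zpow_mul,
    zpow_natCast]
  · rw [hx, ← zpow_mul, ← zpow_natCast, ← zpow_mul]
    push_cast; ring_nf
  · rw [hy, ← zpow_mul, ← zpow_natCast, ← zpow_mul]
    push_cast; ring_nf

end Normalization

lemma finite_and_card_le_of_commute {Q : Type*} [Group Q] {x y : Q} (hgen : closure {x, y} = ⊤)
    (hxy : Commute x y) {s t : ℕ} (hs : 0 < s) (ht : 0 < t) (hxs : x ^ s = 1) (hyt : y ^ t = 1) :
    Finite Q ∧ Nat.card Q ≤ s * t := by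
  have : Finite (zpowers x) :=
    (finite_zpowers.mpr (isOfFinOrder_iff_pow_eq_one.mpr ⟨s, hs, hxs⟩)).to_subtype
  have : Finite (zpowers y) :=
    (finite_zpowers.mpr (isOfFinOrder_iff_pow_eq_one.mpr ⟨t, ht, hyt⟩)).to_subtype
  let φ := (zpowers x).subtype.noncommCoprod (zpowers y).subtype fun ⟨_, i, hi⟩ ⟨_, j, hj⟩ ↦ by
    simpa [← hi, ← hj] using hxy.zpow_zpow i j
  have hφ : Function.Surjective φ := by
    rw [← MonoidHom.range_eq_top, eq_top_iff, ← hgen, closure_le, Set.insert_subset_iff,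
      Set.singleton_subset_iff]
    exact ⟨⟨(⟨x, mem_zpowers x⟩, 1), by simp [φ]⟩, ⟨(1, ⟨y, mem_zpowers y⟩), by simp [φ]⟩⟩
  refine ⟨Finite.of_surjective φ hφ, ?_⟩
  calc Nat.card Q ≤ Nat.card (zpowers x × zpowers y) := Nat.card_le_card_of_surjective φ hφ
    _ = orderOf x * orderOf y := by rw [Nat.card_prod, Nat.card_zpowers, Nat.card_zpowers]
    _ ≤ s * t := Nat.mul_le_mul (orderOf_le_of_pow_eq_one hs hxs) (orderOf_le_of_pow_eq_one ht hyt)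

namespace GG

variable {p m n1 n2 s1 s2 : ℕ}

local notation "b₁" => (PresentedGroup.of 0 : GG p m n1 n2 s1 s2)
local notation "b₂" => (PresentedGroup.of 1 : GG p m n1 n2 s1 s2)
local notation "a₀" => b₂⁻¹ * b₁⁻¹ * b₂ * b₁

lemma closure_of_eq_top : closure {b₁, b₂} = ⊤ := by
  rw [← PresentedGroup.closure_range_of]
  congr 1
  ext; simp [Fin.exists_fin_two, eq_comm]

lemma relations : a₀ ^ p ^ m = 1 ∧ Commute b₁ a₀ ∧ Commute b₂ a₀ ∧
    b₁ ^ p ^ n1 = a₀ ^ p ^ s1 ∧ b₂ ^ p ^ n2 = a₀ ^ p ^ s2 := by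
  have hrel : ∀ r ∈ pgRels p m n1 n2 s1 s2, PresentedGroup.mk _ r = 1 :=
    fun _ ↦ PresentedGroup.one_of_mem
  have hof : ∀ i, PresentedGroup.mk (pgRels p m n1 n2 s1 s2) (FreeGroup.of i) =
    PresentedGroup.of i := fun _ ↦ rfl
  have ha := hrel _ (Set.mem_insert _ _)
  have ha₁ := hrel _ (Set.mem_insert_of_mem _ (Set.mem_insert _ _))
  have ha₂ := hrel _ (Set.mem_insert_of_mem _ (Set.mem_insert_of_mem _ (Set.mem_insert _ _)))
  have hb₁ := hrel _ (Set.mem_insert_of_mem _ (Set.mem_insert_of_mem _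
    (Set.mem_insert_of_mem _ (Set.mem_insert _ _))))
  have hb₂ := hrel _ (Set.mem_insert_of_mem _ (Set.mem_insert_of_mem _
    (Set.mem_insert_of_mem _ (Set.mem_insert_of_mem _ rfl))))
  simp only [map_mul, map_inv, map_pow, hof] at ha ha₁ ha₂ hb₁ hb₂
  refine ⟨ha, ?_, ?_, mul_inv_eq_one.mp hb₁, mul_inv_eq_one.mp hb₂⟩
  · exact (inv_mul_eq_one.mp (by simpa only [mul_inv_rev, inv_inv, mul_assoc] using ha₁)).symm
  · exact (inv_mul_eq_one.mp (by simpa only [mul_inv_rev, inv_inv, mul_assoc] using ha₂)).symm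

lemma commutatorWord_mem_center : a₀ ∈ center (GG p m n1 n2 s1 s2) := by
  obtain ⟨-, h₁, h₂, -⟩ := @relations p m n1 n2 s1 s2
  have : closure {b₁, b₂} ≤ centralizer {a₀} := (closure_le _).mpr <| Set.insert_subset_iff.mpr
    ⟨mem_centralizer_singleton_iff.mpr h₁.eq, Set.singleton_subset_iff.mpr
      (mem_centralizer_singleton_iff.mpr h₂.eq)⟩
  exact mem_center_iff.mpr fun g ↦
    mem_centralizer_singleton_iff.mp (this (closure_of_eq_top ▸ mem_top g))

lemma finite_and_card_le (hp : 0 < p) :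
    Finite (GG p m n1 n2 s1 s2) ∧ Nat.card (GG p m n1 n2 s1 s2) ≤ p ^ n1 * p ^ n2 * p ^ m := by
  obtain ⟨ha, -, -, hb₁, hb₂⟩ := @relations p m n1 n2 s1 s2
  have : (zpowers a₀).Normal := ⟨fun n hn g ↦ by
    rwa [mem_center_iff.mp (zpowers_le.mpr commutatorWord_mem_center hn) g, mul_inv_cancel_right]⟩
  set q := QuotientGroup.mk' (zpowers a₀)
  have hqa : q a₀ = 1 := (QuotientGroup.eq_one_iff _).mpr (mem_zpowers _)
  have hcomm : Commute (q b₁) (q b₂) := by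
    simp only [map_mul, map_inv] at hqa
    exact inv_mul_eq_one.mp (by simpa only [mul_inv_rev, mul_assoc] using hqa)
  obtain ⟨hQ, hQcard⟩ := finite_and_card_le_of_commute
    (closure_pair_map_eq_top (QuotientGroup.mk'_surjective _) closure_of_eq_top) hcomm
    (pow_pos hp n1) (pow_pos hp n2) (by rw [← map_pow, hb₁, map_pow, hqa, one_pow])
    (by rw [← map_pow, hb₂, map_pow, hqa, one_pow])
  have hcard := card_eq_card_quotient_mul_card_subgroup (zpowers a₀)
  rw [Nat.card_zpowers] at hcard
  have hpos : 0 < orderOf a₀ :=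
    orderOf_pos_iff.mpr (isOfFinOrder_iff_pow_eq_one.mpr ⟨_, pow_pos hp m, ha⟩)
  refine ⟨Nat.finite_of_card_ne_zero (hcard ▸ mul_ne_zero Nat.card_pos.ne' hpos.ne'), ?_⟩
  rw [hcard]
  exact Nat.mul_le_mul hQcard (orderOf_le_of_pow_eq_one (pow_pos hp m) ha)

end GG

lemma nonempty_mulEquiv_GG {G : Type*} [Group G] [Finite G] (hcl : commutator G ≤ center G)
    {p m n1 n2 s1 s2 : ℕ} (hp : 0 < p) {x y : G}
    (hgen : closure {x, y} = ⊤) (hc : ⁅y, x⁆ ^ p ^ m = 1) (hx : x ^ p ^ n1 = ⁅y, x⁆ ^ p ^ s1)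
    (hy : y ^ p ^ n2 = ⁅y, x⁆ ^ p ^ s2) (hcard : p ^ n1 * p ^ n2 * p ^ m ≤ Nat.card G) :
    Nonempty (G ≃* GG p m n1 n2 s1 s2) := by
  have hword : y⁻¹ * x⁻¹ * y * x = ⁅y, x⁆ := by
    rw [← commutatorElement_inv_inv hcl, commutatorElement_def, inv_inv, inv_inv]
  have hrels : ∀ r ∈ pgRels p m n1 n2 s1 s2, FreeGroup.lift ![x, y] r = 1 := by
    simp only [pgRels, Set.mem_insert_iff, Set.mem_singleton_iff, forall_eq_or_imp, forall_eq,
      map_mul, map_inv, map_pow, FreeGroup.lift_apply_of, Matrix.cons_val_zero,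
      Matrix.cons_val_one, hword]
    refine ⟨hc, ?_, ?_, by rw [hx, mul_inv_cancel], by rw [hy, mul_inv_cancel]⟩ <;>
      rw [mul_assoc _ ⁅y, x⁆⁻¹, (commute_commutatorElement hcl y x _).inv_left.eq] <;> group
  set π := PresentedGroup.toGroup hrels
  have hπ : Function.Surjective π := by
    rw [← MonoidHom.range_eq_top, eq_top_iff, ← hgen, closure_le, Set.insert_subset_iff,
      Set.singleton_subset_iff]
    exact ⟨⟨PresentedGroup.of 0, PresentedGroup.toGroup.of hrels⟩,
      ⟨PresentedGroup.of 1, PresentedGroup.toGroup.of hrels⟩⟩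
  obtain ⟨_, hGG⟩ := GG.finite_and_card_le (s1 := s1) (s2 := s2) hp
  have hcardeq := (Nat.card_le_card_of_surjective π hπ).antisymm (hGG.trans hcard)
  exact ⟨(MulEquiv.ofBijective π ((Nat.bijective_iff_surjective_and_card π).mpr
    ⟨hπ, hcardeq.symm⟩)).symm⟩

lemma exists_generators_of_class_two {G : Type*} [Group G] [Finite G] {p : ℕ} (hp : p.Prime)
    (hGp : IsPGroup p G) (h2gen : ∃ a b : G, closure {a, b} = ⊤)
    (hcl : commutator G ≤ center G) (hnt : commutator G ≠ ⊥) :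
    ∃ (m n1 n2 : ℕ) (x y : G), Nat.card (commutator G) = p ^ m ∧ 0 < m ∧ m ≤ n2 ∧ n2 ≤ n1 ∧
      closure {x, y} = ⊤ ∧ x ^ p ^ n1 ∈ commutator G ∧ y ^ p ^ n2 ∈ commutator G ∧
      p ^ n1 * p ^ n2 * p ^ m ≤ Nat.card G := by
  have := Fact.mk hp
  set q := Abelianization.of (G := G)
  have hq : Function.Surjective q := QuotientGroup.mk_surjective
  obtain ⟨g₁, g₂, hgen⟩ := h2gen
  obtain ⟨n1, n2, u, v, hgenA, hn1, hn2, hn, hcardA⟩ :=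
    (hGp.of_surjective q hq).exists_closure_pair_eq_top_card_le hp (closure_pair_map_eq_top hq hgen)
  obtain ⟨x, rfl⟩ := hq u
  obtain ⟨y, rfl⟩ := hq v
  have hsup : closure {x, y} ⊔ commutator G = ⊤ := by
    rw [← Abelianization.ker_of, ← comap_map_eq, MonoidHom.map_closure, Set.image_pair, hgenA,
      comap_top]
  have hpow : ∀ (g : G) (n : ℕ), orderOf (q g) = p ^ n → g ^ p ^ n ∈ commutator G :=
    fun g n h ↦ by rw [← Abelianization.ker_of, MonoidHom.mem_ker, map_pow, ← h, pow_orderOf_eq_one]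
  have hy := hpow y n2 hn2
  obtain ⟨m, hm⟩ := IsPGroup.iff_card.mp (hGp.to_subgroup (commutator G))
  refine ⟨m, n1, n2, x, y, hm, ?_, ?_, hn, closure_pair_eq_top_of_sup_commutator hcl hsup,
    hpow x n1 hn1, hy, ?_⟩
  · exact Nat.pos_of_ne_zero fun h0 ↦ hnt (card_eq_one.mp (by rw [hm, h0, pow_zero]))
  · have hord : orderOf ⁅y, x⁆ = p ^ m := by
      rw [← Nat.card_zpowers, ← commutator_eq_zpowers hcl hsup, hm]
    have : ⁅y, x⁆ ^ p ^ n2 = 1 := by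
      rw [← mul_one (p ^ n2), ← commutatorElement_pow_pow hcl, pow_one,
        (commutatorElement_eq_one_of_mem_commutator hcl hy x).1]
    exact (Nat.pow_dvd_pow_iff_le_right hp.one_lt).mp (hord ▸ orderOf_dvd_of_pow_eq_one this)
  · rw [card_eq_card_quotient_mul_card_subgroup (commutator G), hm]
    exact Nat.mul_le_mul_right _ hcardA

/-- Every finite 2-generated `p`-group of nilpotency class exactly 2 is isomorphic to
`G_p(m,n1,n2,s1,s2)` for some admissible tuple `(m,n1,n2,s1,s2)`. -/
theorem exists_admissible_tuple_iso
    (p : ℕ) (hp : p.Prime) (G : Type*) [Group G] [Finite G] (hGp : IsPGroup p G)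
    (h2gen : ∃ a b : G, Subgroup.closure {a, b} = ⊤)
    (hclass : commutator G ≤ Subgroup.center G) (hnt : commutator G ≠ ⊥) :
    ∃ m n1 n2 s1 s2 : ℕ, Admissible p m n1 n2 s1 s2 ∧
      Nonempty (G ≃* GG p m n1 n2 s1 s2) := by
  obtain ⟨m, n1, n2, x, y, hm, hm0, hmn, hn, hgen, hx, hy, hcard⟩ :=
    exists_generators_of_class_two hp hGp h2gen hclass hnt
  have hexp : ∀ g h : G, ⁅g, h⁆ ^ p ^ m = 1 := fun g h ↦ by
    rw [← hm]
    exact congrArg Subtype.val (pow_card_eq_one' (x := (⟨_, commutator_mem_commutator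
      (mem_top g) (mem_top h)⟩ : commutator G)))
  have hcomm := commutator_eq_zpowers hclass (x := x) (y := y) (by rw [hgen, top_sup_eq])
  obtain ⟨a, ha, hxa⟩ := exists_hasLevel hp.one_lt (hexp y x) (hcomm ▸ hx)
  obtain ⟨b, hb, hyb⟩ := exists_hasLevel hp.one_lt (hexp y x) (hcomm ▸ hy)
  obtain ⟨x', y', s1, s2, hadm, hpair⟩ :=
    IsLevelPair.exists_admissible hclass hp (hexp y x) hm0 hmn hn ⟨hgen, hxa, hyb⟩ ha hb
  obtain ⟨x'', y'', hgen', hx', hy'⟩ := hpair.exists_eq_commutatorElement_pow hclass hp hGp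
  exact ⟨m, n1, n2, s1, s2, hadm, nonempty_mulEquiv_GG hclass hp.pos hgen' (hexp y'' x'') hx' hy'
    hcard⟩
end

section
/- Let p be a prime and let G be a finite p-group of nilpotency class exactly 2 such that G' has order p^m, G/G' ≅ C_{p^n1} × C_{p^n2} with 0 < n2 ≤ n1, and the pair (p^(m+n1-s1), p^(m+n2-s2)) is the maximum, with respect to the lexicographical order, of the set of pairs (|g1|,|g2|) where (g1,g2) ranges over all pairs of elements of G such that G/G' is the internal direct product of the cyclic subgroups generated by the images of g1 and g2, with the image of g_i having order p^(n_i). Then the tuple (m,n1,n2,s1,s2) is admissible for p, i.e. it satisfies: (A1) 0 < m and s1 ≤ m, s2 ≤ m ≤ n2 ≤ n1; (A2) n1 - s1 ≥ n2 - s2; (A3) if p = 2 then s1 < n1; (A4) either s1 ≥ s2, or p = 2 and n1 = n2 = m = s2 = s1 + 1. -/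
/-- `GoodPair p n1 n2 g1 g2` says that the images `x1, x2` of `g1, g2` in the
abelianization `G/G'` realize `G/G'` as the internal direct product
`⟨x1⟩ × ⟨x2⟩` with `x_i` of order `p^(n_i)`. -/
def GoodPair (p n1 n2 : ℕ) {G : Type*} [Group G] (g1 g2 : G) : Prop :=
  Subgroup.closure {Abelianization.of g1} ⊔ Subgroup.closure {Abelianization.of g2} = ⊤ ∧
  Subgroup.closure {Abelianization.of g1} ⊓ Subgroup.closure {Abelianization.of g2} = ⊥ ∧
  orderOf (Abelianization.of g1) = p ^ n1 ∧ orderOf (Abelianization.of g2) = p ^ n2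

/-- `(A, B)` is the maximum, in the lexicographic order, of the set of pairs of orders
`(|g1|, |g2|)` where `(g1, g2)` ranges over the pairs with `GoodPair p n1 n2 g1 g2`. -/
def IsLexMaxOrders (G : Type*) [Group G] (p n1 n2 A B : ℕ) : Prop :=
  (∃ b1 b2 : G, GoodPair p n1 n2 b1 b2 ∧ orderOf b1 = A ∧ orderOf b2 = B) ∧
  ∀ g1 g2 : G, GoodPair p n1 n2 g1 g2 →
    orderOf g1 < A ∨ (orderOf g1 = A ∧ orderOf g2 ≤ B)

open scoped commutatorElement
open Subgroup

section ClassTwo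

variable {G : Type*} [Group G]

theorem pow_orderOf_abelianization_mem_commutator (x : G) :
    x ^ orderOf (Abelianization.of x) ∈ commutator G := by
  rw [← Abelianization.ker_of, MonoidHom.mem_ker, map_pow, pow_orderOf_eq_one]

theorem commute_commutatorElement_s4 (h : commutator G ≤ center G) (x y g : G) :
    Commute ⁅x, y⁆ g :=
  (mem_center_iff.1 (h (commutator_mem_commutator (mem_top x) (mem_top y))) g).symm

theorem commutatorElement_eq_one_of_mem_commutator_s4 (h : commutator G ≤ center G) (x : G)
    {d : G} (hd : d ∈ commutator G) : ⁅x, d⁆ = 1 :=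
  commutatorElement_eq_one_iff_commute.2 (mem_center_iff.1 (h hd) x)

theorem commutatorElement_mul_right_of_le_center (h : commutator G ≤ center G) (x y z : G) :
    ⁅x, y * z⁆ = ⁅x, y⁆ * ⁅x, z⁆ := by
  rw [commutatorElement_mul_right_eq_mul_conj, mul_assoc ⁅x, y⁆,
    (commute_commutatorElement_s4 h x z y).symm.eq, mul_assoc, mul_inv_cancel_right]

def commutatorElementRightHom (h : commutator G ≤ center G) (x : G) : G →* G where
  toFun y := ⁅x, y⁆
  map_one' := commutatorElement_one_right x
  map_mul' := commutatorElement_mul_right_of_le_center h x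

theorem commutatorElement_pow_right_of_le_center (h : commutator G ≤ center G) (x y : G)
    (k : ℕ) : ⁅x, y ^ k⁆ = ⁅x, y⁆ ^ k :=
  map_pow (commutatorElementRightHom h x) y k

theorem commutatorElement_pow_left_of_le_center (h : commutator G ≤ center G) (x y : G)
    (k : ℕ) : ⁅x ^ k, y⁆ = ⁅x, y⁆ ^ k := by
  rw [← commutatorElement_inv, commutatorElement_pow_right_of_le_center h, ← inv_pow,
    commutatorElement_inv]

theorem mul_pow_of_le_center (h : commutator G ≤ center G) (x y : G) (k : ℕ) :
    (x * y) ^ k = x ^ k * y ^ k * ⁅y, x⁆ ^ k.choose 2 := by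
  induction k with
  | zero => simp
  | succ k ih =>
    have hswap : y ^ k * x = x * y ^ k * ⁅y, x⁆ ^ k := by
      rw [← commutatorElement_pow_left_of_le_center h, ← (commute_commutatorElement_s4 h _ _ _).eq,
        commutatorElement_def]
      group
    rw [pow_succ, ih, Nat.choose_succ_left _ _ (by omega), Nat.choose_one_right]
    calc x ^ k * y ^ k * ⁅y, x⁆ ^ k.choose 2 * (x * y)
        = x ^ k * (y ^ k * x) * y * ⁅y, x⁆ ^ k.choose 2 := by
          rw [mul_assoc _ (⁅y, x⁆ ^ k.choose 2),
            ((commute_commutatorElement_s4 h y x (x * y)).pow_left _).eq]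
          group
      _ = x ^ (k + 1) * y ^ k * (⁅y, x⁆ ^ k * y) * ⁅y, x⁆ ^ k.choose 2 := by
          rw [hswap]; group
      _ = x ^ (k + 1) * y ^ (k + 1) * ⁅y, x⁆ ^ (k + k.choose 2) := by
          rw [((commute_commutatorElement_s4 h y x y).pow_left k).eq]
          group

theorem mul_pow_pow_of_le_center (h : commutator G ≤ center G) (x y : G) (u k : ℕ) :
    (y * x ^ u) ^ k = y ^ k * x ^ (u * k) * ⁅x, y⁆ ^ (u * k.choose 2) := by
  rw [mul_pow_of_le_center h, commutatorElement_pow_left_of_le_center h, ← pow_mul, ← pow_mul]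

theorem commutatorElement_pow_orderOf_of_eq_one (h : commutator G ≤ center G) (x y : G) :
    ⁅x, y⁆ ^ orderOf (Abelianization.of y) = 1 := by
  rw [← commutatorElement_pow_right_of_le_center h]
  exact commutatorElement_eq_one_of_mem_commutator_s4 h x
    (pow_orderOf_abelianization_mem_commutator y)

end ClassTwo

section CyclicCommutator

variable {G : Type*} [Group G] {a b : G}

theorem eq_top_of_commutator_le_of_mem
    (hab : zpowers (Abelianization.of a) ⊔ zpowers (Abelianization.of b) = ⊤)
    {H : Subgroup G} (hH : commutator G ≤ H) (ha : a ∈ H) (hb : b ∈ H) : H = ⊤ := by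
  have hmap : H.map Abelianization.of = ⊤ := by
    rw [eq_top_iff, ← hab, sup_le_iff, zpowers_le, zpowers_le]
    exact ⟨mem_map_of_mem _ ha, mem_map_of_mem _ hb⟩
  rw [← comap_map_eq_self ((Abelianization.ker_of G).le.trans hH), hmap, comap_top]

theorem commutatorElement_mem_of_mem (h : commutator G ≤ center G)
    (hab : zpowers (Abelianization.of a) ⊔ zpowers (Abelianization.of b) = ⊤)
    {Z : Subgroup G} {x : G} (ha : ⁅x, a⁆ ∈ Z) (hb : ⁅x, b⁆ ∈ Z) (y : G) :
    ⁅x, y⁆ ∈ Z := by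
  have htop : Z.comap (commutatorElementRightHom h x) = ⊤ :=
    eq_top_of_commutator_le_of_mem hab (fun d hd ↦ by
      simp [commutatorElementRightHom, commutatorElement_eq_one_of_mem_commutator_s4 h x hd]) ha hb
  simpa [commutatorElementRightHom] using htop.ge (mem_top y)

theorem commutator_eq_zpowers_commutatorElement (h : commutator G ≤ center G)
    (hab : zpowers (Abelianization.of a) ⊔ zpowers (Abelianization.of b) = ⊤) :
    commutator G = zpowers ⁅a, b⁆ := by
  have hc : ⁅a, b⁆ ∈ zpowers ⁅a, b⁆ := mem_zpowers _
  have hmem_a : ∀ y, ⁅a, y⁆ ∈ zpowers ⁅a, b⁆ :=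
    commutatorElement_mem_of_mem h hab (by simp) hc
  have hmem_b : ∀ y, ⁅b, y⁆ ∈ zpowers ⁅a, b⁆ :=
    commutatorElement_mem_of_mem h hab (by rw [← commutatorElement_inv a b]; exact inv_mem hc)
      (by simp)
  refine le_antisymm ?_ ((zpowers_le).2 (commutator_mem_commutator (mem_top a) (mem_top b)))
  rw [commutator_eq_closure, closure_le]
  rintro _ ⟨x, y, rfl⟩
  refine commutatorElement_mem_of_mem h hab ?_ ?_ y
  · rw [← commutatorElement_inv a x]; exact inv_mem (hmem_a x)
  · rw [← commutatorElement_inv b x]; exact inv_mem (hmem_b x)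

end CyclicCommutator

section Complements

variable {A : Type*} [CommGroup A] {x y z : A}

theorem IsCompl.zpowers_mul (h : IsCompl (zpowers x) (zpowers y)) (hz : z ∈ zpowers x)
    (hzy : z ^ orderOf y = 1) :
    IsCompl (zpowers x) (zpowers (y * z)) ∧ orderOf (y * z) = orderOf y := by
  have hy_eq_one : ∀ k : ℤ, y ^ k ∈ zpowers x → y ^ k = 1 := fun k hk ↦
    disjoint_def.1 h.disjoint hk (zpow_mem (mem_zpowers y) k)
  have hz_eq_one : ∀ k : ℤ, y ^ k = 1 → z ^ k = 1 := fun k hk ↦ by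
    obtain ⟨j, rfl⟩ := orderOf_dvd_iff_zpow_eq_one.2 hk
    rw [zpow_mul, zpow_natCast, hzy, one_zpow]
  have hyz : ∀ k : ℤ, (y * z) ^ k ∈ zpowers x → y ^ k = 1 := fun k hk ↦ by
    refine hy_eq_one k ?_
    simpa [mul_zpow] using mul_mem hk (zpow_mem (inv_mem hz) k)
  refine ⟨⟨disjoint_def.2 ?_, codisjoint_iff.2 ?_⟩, orderOf_eq_orderOf_iff.2 fun n ↦ ?_⟩
  · rintro _ hw ⟨k, rfl⟩
    dsimp only at hw ⊢
    rw [mul_zpow, hyz k hw, hz_eq_one k (hyz k hw), one_mul]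
  · rw [eq_top_iff, ← codisjoint_iff.1 h.codisjoint, sup_le_iff]
    refine ⟨le_sup_left, zpowers_le.2 ?_⟩
    simpa using mul_mem (mem_sup_right (mem_zpowers (y * z))) (mem_sup_left (inv_mem hz))
  · have hyz' := hyz n
    have hz' := hz_eq_one n
    simp only [zpow_natCast] at hyz' hz'
    refine ⟨fun hn ↦ hyz' (hn ▸ one_mem _), fun hn ↦ ?_⟩
    rw [mul_pow, hn, hz' hn, one_mul]

end Complements

section GoodPair

variable {p n n1 n2 : ℕ} {G : Type*} [Group G] {g1 g2 : G}

theorem goodPair_iff :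
    GoodPair p n1 n2 g1 g2 ↔
      IsCompl (zpowers (Abelianization.of g1)) (zpowers (Abelianization.of g2)) ∧
        orderOf (Abelianization.of g1) = p ^ n1 ∧ orderOf (Abelianization.of g2) = p ^ n2 := by
  simp only [GoodPair, zpowers_eq_closure, isCompl_iff, disjoint_iff, codisjoint_iff]
  tauto

theorem GoodPair.le_of_orderOf_left_eq (h : GoodPair p n1 n2 g1 g2) (hp : 1 < p) {e : ℕ}
    (hg : orderOf g1 = p ^ e) : n1 ≤ e :=
  (Nat.pow_dvd_pow_iff_le_right hp).1 (hg ▸ h.2.2.1 ▸ orderOf_map_dvd _ g1)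

theorem GoodPair.le_of_orderOf_right_eq (h : GoodPair p n1 n2 g1 g2) (hp : 1 < p) {e : ℕ}
    (hg : orderOf g2 = p ^ e) : n2 ≤ e :=
  (Nat.pow_dvd_pow_iff_le_right hp).1 (hg ▸ h.2.2.2 ▸ orderOf_map_dvd _ g2)

theorem GoodPair.swap (h : GoodPair p n n g1 g2) : GoodPair p n n g2 g1 := by
  obtain ⟨hc, h1, h2⟩ := goodPair_iff.1 h
  exact goodPair_iff.2 ⟨hc.symm, h2, h1⟩

theorem GoodPair.mul_right (h : GoodPair p n1 n2 g1 g2) (hn : n2 ≤ n1) :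
    GoodPair p n1 n2 (g1 * g2) g2 := by
  obtain ⟨hc, h1, h2⟩ := goodPair_iff.1 h
  have hkill : Abelianization.of g2 ^ orderOf (Abelianization.of g1) = 1 := by
    rw [← orderOf_dvd_iff_pow_eq_one, h1, h2]
    exact pow_dvd_pow p hn
  obtain ⟨hc', ho⟩ := hc.symm.zpowers_mul (mem_zpowers _) hkill
  exact goodPair_iff.2 ⟨by simpa using hc'.symm, by simpa [h1] using ho, h2⟩

theorem GoodPair.mul_pow_left (h : GoodPair p n1 n2 g1 g2) (hn : n2 ≤ n1) :
    GoodPair p n1 n2 g1 (g2 * g1 ^ p ^ (n1 - n2)) := by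
  obtain ⟨hc, h1, h2⟩ := goodPair_iff.1 h
  have hkill : (Abelianization.of g1 ^ p ^ (n1 - n2)) ^ orderOf (Abelianization.of g2) = 1 := by
    rw [← pow_mul, h2, ← pow_add, Nat.sub_add_cancel hn, ← h1, pow_orderOf_eq_one]
  obtain ⟨hc', ho⟩ := hc.zpowers_mul (pow_mem (mem_zpowers _) _) hkill
  exact goodPair_iff.2 ⟨by simpa using hc', h1, by simpa [h2] using ho⟩

theorem GoodPair.orderOf_commutatorElement_dvd (hclass : commutator G ≤ center G)
    (h : GoodPair p n1 n2 g1 g2) : orderOf ⁅g1, g2⁆ ∣ p ^ n2 :=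
  orderOf_dvd_of_pow_eq_one (h.2.2.2 ▸ commutatorElement_pow_orderOf_of_eq_one hclass g1 g2)

end GoodPair

theorem orderOf_eq_orderOf_map_mul_orderOf_pow {G H : Type*} [Monoid G] [Monoid H]
    (f : G →* H) {x : G} (hx : IsOfFinOrder x) :
    orderOf x = orderOf (f x) * orderOf (x ^ orderOf (f x)) := by
  have hdvd := orderOf_map_dvd f x
  rw [orderOf_pow_of_dvd (Nat.pos_of_dvd_of_pos hdvd hx.orderOf_pos).ne' hdvd,
    Nat.mul_div_cancel' hdvd]

namespace IsPGroup

variable {p : ℕ} [Fact p.Prime] {G : Type*} [Group G] {x y : G}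

theorem orderOf_dvd_of_le (hG : IsPGroup p G) (h : orderOf x ≤ orderOf y) :
    orderOf x ∣ orderOf y := by
  obtain ⟨k, hk⟩ := iff_orderOf.1 hG x
  obtain ⟨l, hl⟩ := iff_orderOf.1 hG y
  rw [hk, hl] at h ⊢
  exact pow_dvd_pow p ((Nat.pow_le_pow_iff_right (Fact.out : p.Prime).one_lt).1 h)

theorem orderOf_mul_eq_left_of_lt (hG : IsPGroup p G) (hxy : Commute x y)
    (h : orderOf y < orderOf x) : orderOf (x * y) = orderOf x := by
  have hp : p.Prime := Fact.out
  obtain ⟨k, hk⟩ := iff_orderOf.1 hG x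
  obtain ⟨l, hl⟩ := iff_orderOf.1 hG y
  refine hxy.orderOf_mul_eq_left_of_forall_prime_mul_dvd (hG.isOfFinOrder hp.ne_zero x)
    fun q hq hqy ↦ ?_
  rw [hk, hl] at h ⊢
  rw [hl] at hqy
  rw [(Nat.prime_dvd_prime_iff_eq hq hp).1 (hq.dvd_of_dvd_pow hqy), ← pow_succ']
  exact pow_dvd_pow p ((Nat.pow_lt_pow_iff_right hp.one_lt).1 h)

end IsPGroup

theorem Nat.dvd_choose_two_of_odd {n : ℕ} (hn : Odd n) : n ∣ n.choose 2 := by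
  rw [Nat.choose_two_right, Nat.mul_div_assoc n (by obtain ⟨k, rfl⟩ := hn; simp)]
  exact dvd_mul_right n _

theorem Nat.choose_two_two_pow_succ (e : ℕ) :
    (2 ^ (e + 1)).choose 2 = 2 ^ e * (2 ^ (e + 1) - 1) :=
  Nat.choose_two_right _ ▸ Nat.div_eq_of_eq_mul_left two_pos (by rw [pow_succ]; ring)

theorem Nat.not_two_pow_dvd_choose_two {e : ℕ} (he : 0 < e) : ¬ 2 ^ e ∣ (2 ^ e).choose 2 := by
  obtain ⟨e, rfl⟩ := Nat.exists_eq_add_of_lt he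
  rw [zero_add, Nat.choose_two_two_pow_succ, pow_succ]
  intro h
  have hodd := Nat.dvd_of_mul_dvd_mul_left (by positivity) h
  have heven : 2 ∣ 2 ^ (e + 1) := dvd_pow_self 2 e.succ_ne_zero
  have hpos : 0 < 2 ^ (e + 1) := by positivity
  omega

theorem Nat.Prime.pow_dvd_pow_mul_choose_two {p k a e : ℕ} (hp : p.Prime) (hk : k ≤ a + e)
    (h2 : p = 2 → k < a + e) : p ^ k ∣ p ^ a * (p ^ e).choose 2 := by
  rcases hp.eq_two_or_odd' with rfl | hodd
  · obtain _ | e := e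
    · simp
    rw [Nat.choose_two_two_pow_succ, ← mul_assoc, ← pow_add]
    exact dvd_mul_of_dvd_left (pow_dvd_pow 2 (by omega)) _
  · exact (pow_dvd_pow p hk).trans
      (by rw [pow_add]; exact mul_dvd_mul_left _ (Nat.dvd_choose_two_of_odd hodd.pow))

namespace GoodPair

variable {p n1 n2 : ℕ} [Fact p.Prime] {G : Type*} [Group G] {b1 b2 : G} {m e1 e2 : ℕ}

/-- `hlt` says that the `G'`-part `b1 ^ p ^ n1` of `b1` has larger order than the `G'`-part
`b2 ^ p ^ n2` of `b2`; it then dominates the `p ^ n2`-th power of `b2 * b1 ^ p ^ (n1 - n2)`. -/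
theorem orderOf_mul_pow (hGp : IsPGroup p G) (hclass : commutator G ≤ center G)
    (hgood : GoodPair p n1 n2 b1 b2) (hn12 : n2 ≤ n1) (hb1 : orderOf b1 = p ^ e1)
    (hb2 : orderOf b2 = p ^ e2) (hc : orderOf ⁅b1, b2⁆ = p ^ m) (hmn : m ≤ n2)
    (hlt : e2 + n1 < e1 + n2) (h2 : p = 2 → m + 1 < e1) :
    orderOf (b2 * b1 ^ p ^ (n1 - n2)) = p ^ (n2 + (e1 - n1)) := by
  have hp : p.Prime := Fact.out
  have hn1 := hgood.le_of_orderOf_left_eq hp.one_lt hb1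
  have hn2 := hgood.le_of_orderOf_right_eq hp.one_lt hb2
  have horder_pow {b : G} {e n : ℕ} (hb : orderOf b = p ^ e) (hn : n ≤ e) :
      orderOf (b ^ p ^ n) = p ^ (e - n) := by
    rw [orderOf_pow_of_dvd (pow_ne_zero n hp.ne_zero) (hb ▸ pow_dvd_pow p hn), hb,
      Nat.pow_div hn hp.pos]
  set z1 := b1 ^ p ^ n1
  set z2 := b2 ^ p ^ n2
  set t := ⁅b1, b2⁆ ^ (p ^ (n1 - n2) * (p ^ n2).choose 2)
  have hz2 : z2 ∈ center G := by
    have h := pow_orderOf_abelianization_mem_commutator b2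
    rw [hgood.2.2.2] at h
    exact hclass h
  have hz : orderOf (z1 * z2) = p ^ (e1 - n1) := by
    have hz21 : orderOf z2 < orderOf z1 := by
      rw [horder_pow hb1 hn1, horder_pow hb2 hn2]
      exact Nat.pow_lt_pow_right hp.one_lt (by omega)
    rw [hGp.orderOf_mul_eq_left_of_lt (mem_center_iff.1 hz2 z1) hz21, horder_pow hb1 hn1]
  have ht : orderOf t < orderOf (z1 * z2) := by
    have hdvd : p ^ m ∣ p ^ (n1 - n2) * (p ^ n2).choose 2 * p ^ (e1 - n1 - 1) := by
      have := hp.pow_dvd_pow_mul_choose_two (k := m) (a := n1 - n2 + (e1 - n1 - 1)) (e := n2)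
        (by omega) (fun hp2 ↦ by have := h2 hp2; omega)
      rw [pow_add] at this
      exact this.trans (dvd_of_eq (by ring))
    have ht_dvd : orderOf t ∣ p ^ (e1 - n1 - 1) := orderOf_dvd_of_pow_eq_one <| by
      rw [← pow_mul, ← orderOf_dvd_iff_pow_eq_one, hc]
      exact hdvd
    calc orderOf t ≤ p ^ (e1 - n1 - 1) := Nat.le_of_dvd (pow_pos hp.pos _) ht_dvd
      _ < orderOf (z1 * z2) := hz ▸ Nat.pow_lt_pow_right hp.one_lt (by omega)
  have hpow : (b2 * b1 ^ p ^ (n1 - n2)) ^ p ^ n2 = z1 * z2 * t := by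
    rw [mul_pow_pow_of_le_center hclass, ← pow_add, Nat.sub_add_cancel hn12,
      (mem_center_iff.1 hz2 z1)]
  have hgood' := (goodPair_iff.1 (hgood.mul_pow_left hn12)).2.2
  rw [orderOf_eq_orderOf_map_mul_orderOf_pow Abelianization.of
      (hGp.isOfFinOrder hp.ne_zero (b2 * b1 ^ p ^ (n1 - n2))), hgood', hpow,
    hGp.orderOf_mul_eq_left_of_lt ((commute_commutatorElement_s4 hclass _ _ _).pow_left _).symm ht,
    hz, pow_add]

end GoodPair

namespace IsLexMaxOrders

variable {p n1 n2 A B : ℕ} {G : Type*} [Group G] {g1 g2 : G}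

theorem orderOf_le_left (hmax : IsLexMaxOrders G p n1 n2 A B) (h : GoodPair p n1 n2 g1 g2) :
    orderOf g1 ≤ A :=
  (hmax.2 g1 g2 h).elim le_of_lt fun h' ↦ h'.1.le

theorem orderOf_le_right (hmax : IsLexMaxOrders G p n1 n2 A B) (h : GoodPair p n1 n2 g1 g2)
    (h1 : orderOf g1 = A) : orderOf g2 ≤ B :=
  (hmax.2 g1 g2 h).elim (fun h' ↦ absurd h1 h'.ne) And.right

variable [Fact p.Prime] {b1 b2 : G} {m : ℕ}

theorem pow_orderOf_left_eq_commutatorElement_pow (hGp : IsPGroup p G)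
    (hclass : commutator G ≤ center G) (hgood : GoodPair p n1 n2 b1 b2) (hn12 : n2 ≤ n1)
    (hmax : IsLexMaxOrders G p n1 n2 (orderOf b1) B) :
    b2 ^ orderOf b1 = ⁅b1, b2⁆ ^ (orderOf b1).choose 2 := by
  have hmul : (b1 * b2) ^ orderOf b1 = 1 := orderOf_dvd_iff_pow_eq_one.1 <|
    hGp.orderOf_dvd_of_le (hmax.orderOf_le_left (hgood.mul_right hn12))
  rw [mul_pow_of_le_center hclass, pow_orderOf_eq_one, one_mul, ← commutatorElement_inv,
    inv_pow, mul_inv_eq_one] at hmul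
  exact hmul

theorem orderOf_commutatorElement_lt_left (hGp : IsPGroup 2 G)
    (hclass : commutator G ≤ center G) (hgood : GoodPair 2 n1 n2 b1 b2) (hn12 : n2 ≤ n1)
    (hmax : IsLexMaxOrders G 2 n1 n2 (orderOf b1) (orderOf b2))
    (hc : orderOf ⁅b1, b2⁆ = 2 ^ m) (hm : 0 < m) (hmn : m ≤ n2) :
    orderOf ⁅b1, b2⁆ < orderOf b1 := by
  by_contra! hle
  obtain ⟨e1, hb1⟩ := IsPGroup.iff_orderOf.1 hGp b1
  have hn1 := hgood.le_of_orderOf_left_eq one_lt_two hb1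
  have he1 : e1 ≤ m := (Nat.pow_le_pow_iff_right one_lt_two).1 (hb1 ▸ hc ▸ hle)
  obtain rfl : n2 = n1 := by omega
  have hb2 : b2 ^ orderOf b1 = 1 := orderOf_dvd_iff_pow_eq_one.1 <|
    hGp.orderOf_dvd_of_le (hmax.orderOf_le_left hgood.swap)
  have h := hmax.pow_orderOf_left_eq_commutatorElement_pow hGp hclass hgood le_rfl
  rw [hb2, eq_comm, ← orderOf_dvd_iff_pow_eq_one, hc, hb1, show e1 = m by omega] at h
  exact Nat.not_two_pow_dvd_choose_two hm h

theorem orderOf_right_le_left (hGp : IsPGroup p G) (hclass : commutator G ≤ center G)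
    (hgood : GoodPair p n1 n2 b1 b2) (hn12 : n2 ≤ n1)
    (hmax : IsLexMaxOrders G p n1 n2 (orderOf b1) (orderOf b2))
    (hc : orderOf ⁅b1, b2⁆ = p ^ m) (hmn : m ≤ n2)
    (h2 : p = 2 → orderOf ⁅b1, b2⁆ < orderOf b1) :
    orderOf b2 ≤ orderOf b1 := by
  have hp : p.Prime := Fact.out
  obtain ⟨e1, hb1⟩ := IsPGroup.iff_orderOf.1 hGp b1
  have hn1 := hgood.le_of_orderOf_left_eq hp.one_lt hb1
  have hvanish : ⁅b1, b2⁆ ^ (orderOf b1).choose 2 = 1 := by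
    rw [← orderOf_dvd_iff_pow_eq_one, hc, hb1]
    have h2' : p = 2 → m < e1 := fun hp2 ↦ by
      have := h2 hp2
      rwa [hc, hb1, Nat.pow_lt_pow_iff_right hp.one_lt] at this
    simpa using hp.pow_dvd_pow_mul_choose_two (a := 0) (by omega) (by simpa using h2')
  have h := hmax.pow_orderOf_left_eq_commutatorElement_pow hGp hclass hgood hn12
  rw [hvanish, ← orderOf_dvd_iff_pow_eq_one] at h
  exact Nat.le_of_dvd (hGp.isOfFinOrder hp.ne_zero b1).orderOf_pos h

theorem orderOf_mul_pow_le_or (hGp : IsPGroup p G) (hclass : commutator G ≤ center G)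
    (hgood : GoodPair p n1 n2 b1 b2) (hn12 : n2 ≤ n1)
    (hmax : IsLexMaxOrders G p n1 n2 (orderOf b1) (orderOf b2))
    (hc : orderOf ⁅b1, b2⁆ = p ^ m) (hmn : m ≤ n2)
    (h2 : p = 2 → orderOf ⁅b1, b2⁆ < orderOf b1) :
    orderOf b1 * p ^ n2 ≤ orderOf b2 * p ^ n1 ∨
      (p = 2 ∧ orderOf b1 = p * orderOf ⁅b1, b2⁆) := by
  have hp : p.Prime := Fact.out
  obtain ⟨e1, hb1⟩ := IsPGroup.iff_orderOf.1 hGp b1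
  obtain ⟨e2, hb2⟩ := IsPGroup.iff_orderOf.1 hGp b2
  rw [hb1, hb2, hc, ← pow_add, ← pow_add, ← pow_succ', Nat.pow_le_pow_iff_right hp.one_lt,
    pow_right_inj₀ hp.pos hp.one_lt.ne']
  rw [hc, hb1, Nat.pow_lt_pow_iff_right hp.one_lt] at h2
  by_contra! hlt
  have hle := hmax.orderOf_le_right (hgood.mul_pow_left hn12) rfl
  rw [hgood.orderOf_mul_pow hGp hclass hn12 hb1 hb2 hc hmn (by omega)
    (fun hp2 ↦ by have := h2 hp2; have := hlt.2 hp2; omega), hb2,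
    Nat.pow_le_pow_iff_right hp.one_lt] at hle
  omega

end IsLexMaxOrders

theorem invariants_give_admissible_tuple_general
    (p : ℕ) (hp : p.Prime) (G : Type*) [Group G] (hGp : IsPGroup p G)
    (hclass : commutator G ≤ Subgroup.center G) (hnt : commutator G ≠ ⊥)
    (m n1 n2 s1 s2 : ℕ)
    (hm : Nat.card ↥(commutator G) = p ^ m)
    (hn12 : n2 ≤ n1)
    (hmax : IsLexMaxOrders G p n1 n2 (p ^ (m + n1 - s1)) (p ^ (m + n2 - s2))) :
    Admissible p m n1 n2 s1 s2 := by
  have : Fact p.Prime := ⟨hp⟩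
  obtain ⟨⟨b1, b2, hgood, hb1, hb2⟩, -⟩ := id hmax
  rw [← hb1, ← hb2] at hmax
  have hc : orderOf ⁅b1, b2⁆ = p ^ m := by
    rw [← Nat.card_zpowers, ← commutator_eq_zpowers_commutatorElement hclass
      (codisjoint_iff.1 (goodPair_iff.1 hgood).1.codisjoint), hm]
  have hm0 : 0 < m := Nat.pos_of_ne_zero fun h0 ↦
    hnt (Subgroup.eq_bot_of_card_eq _ (by rw [hm, h0, pow_zero]))
  have hmn : m ≤ n2 := (Nat.pow_dvd_pow_iff_le_right hp.one_lt).1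
    (hc ▸ hgood.orderOf_commutatorElement_dvd hclass)
  have hne1 := hgood.le_of_orderOf_left_eq hp.one_lt hb1
  have hne2 := hgood.le_of_orderOf_right_eq hp.one_lt hb2
  have hA3 : p = 2 → orderOf ⁅b1, b2⁆ < orderOf b1 := by
    rintro rfl
    exact hmax.orderOf_commutatorElement_lt_left hGp hclass hgood hn12 hc hm0 hmn
  have hA2 := hmax.orderOf_right_le_left hGp hclass hgood hn12 hc hmn hA3
  have hA4 := hmax.orderOf_mul_pow_le_or hGp hclass hgood hn12 hc hmn hA3
  simp only [hb1, hb2, hc] at hA2 hA3 hA4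
  rw [Nat.pow_le_pow_iff_right hp.one_lt] at hA2
  rw [Nat.pow_lt_pow_iff_right hp.one_lt] at hA3
  rw [← pow_add, ← pow_add, ← pow_succ', Nat.pow_le_pow_iff_right hp.one_lt,
    pow_right_inj₀ hp.pos hp.one_lt.ne'] at hA4
  refine ⟨⟨hm0, by omega, by omega, hmn, hn12⟩, by omega, fun h2 ↦ ?_, ?_⟩
  · have := hA3 h2
    omega
  rcases hA4 with h | ⟨h2, h⟩
  · exact Or.inl (by omega)
  · exact (le_or_gt s2 s1).imp id fun hs ↦ ⟨h2, by omega, by omega, by omega, by omega⟩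

/-- If `G` is a finite `p`-group of nilpotency class exactly 2 with `|G'| = p^m`,
`G/G' ≅ C_{p^n1} × C_{p^n2}` (`0 < n2 ≤ n1`), and `(p^(m+n1-s1), p^(m+n2-s2))` is the
lexicographic maximum of the pairs of orders of suitable generating pairs,
then `(m,n1,n2,s1,s2)` is admissible for `p`. -/
theorem invariants_give_admissible_tuple
    (p : ℕ) (hp : p.Prime) (G : Type*) [Group G] [Finite G] (hGp : IsPGroup p G)
    (hclass : commutator G ≤ Subgroup.center G) (hnt : commutator G ≠ ⊥)
    (m n1 n2 s1 s2 : ℕ)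
    (hm : Nat.card ↥(commutator G) = p ^ m)
    (hn2 : 0 < n2) (hn12 : n2 ≤ n1)
    (hab : Nonempty (Abelianization G ≃*
      Multiplicative (ZMod (p ^ n1)) × Multiplicative (ZMod (p ^ n2))))
    (hmax : IsLexMaxOrders G p n1 n2 (p ^ (m + n1 - s1)) (p ^ (m + n2 - s2))) :
    Admissible p m n1 n2 s1 s2 :=
  invariants_give_admissible_tuple_general p hp G hGp hclass hnt m n1 n2 s1 s2 hm hn12 hmax
end

section
/- Let p be a prime and let G be a finite p-group of nilpotency class exactly 2 such that G' has order p^m, G/G' ≅ C_{p^n1} × C_{p^n2} with 0 < n2 ≤ n1, and the pair (p^(m+n1-s1), p^(m+n2-s2)) is the maximum, with respect to the lexicographical order, of the set of pairs (|g1|,|g2|) where (g1,g2) ranges over all pairs of elements of G such that G/G' is the internal direct product of the cyclic subgroups generated by the images of g1 and g2, with the image of g_i having order p^(n_i). Then G is isomorphic to G_p(m,n1,n2,s1,s2). -/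
open Subgroup
open scoped commutatorElement

section CentralCommutator

variable {G : Type*} [Group G]

theorem Subgroup.normal_of_le_center {N : Subgroup G} (h : N ≤ center G) : N.Normal :=
  ⟨fun n hn g => by rwa [(mem_center_iff.mp (h hn) g), mul_inv_cancel_right]⟩

theorem mem_center_of_closure_pair_eq_top {x y z : G} (hgen : closure {x, y} = ⊤)
    (hx : Commute z x) (hy : Commute z y) : z ∈ center G := by
  have hle : closure {x, y} ≤ centralizer {z} := by
    rw [closure_le]
    rintro _ (rfl | rfl)
    exacts [mem_centralizer_singleton_iff.mpr hx.eq.symm,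
      mem_centralizer_singleton_iff.mpr hy.eq.symm]
  rw [hgen] at hle
  exact mem_center_iff.mpr fun g => mem_centralizer_singleton_iff.mp (hle (mem_top g))

theorem isMulCommutative_of_closure_pair_eq_top {x y : G} (hgen : closure {x, y} = ⊤)
    (hxy : Commute x y) : IsMulCommutative G := by
  rw [← center_eq_top_iff, eq_top_iff, ← hgen, closure_le]
  rintro z (rfl | rfl)
  · exact mem_center_of_closure_pair_eq_top hgen (.refl z) hxy
  · exact mem_center_of_closure_pair_eq_top hgen hxy.symm (.refl z)

theorem closure_pair_eq_top_of_surjective {H : Type*} [Group H] {f : G →* H}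
    (hf : Function.Surjective f) {x y : G} (hgen : closure {x, y} = ⊤) :
    closure {f x, f y} = ⊤ := by
  rw [← Set.image_pair, ← MonoidHom.map_closure, hgen, ← MonoidHom.range_eq_map,
    MonoidHom.range_eq_top.mpr hf]

theorem commutatorElement_mul_mul_of_mem_center {c d : G} (hc : c ∈ center G)
    (hd : d ∈ center G) (g h : G) : ⁅g * c, h * d⁆ = ⁅g, h⁆ := by
  have hc' := mem_center_iff.mp hc
  have hd' := mem_center_iff.mp hd
  simp only [commutatorElement_def, mul_inv_rev]
  calc g * c * (h * d) * (c⁻¹ * g⁻¹) * (d⁻¹ * h⁻¹)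
      = g * (c * (h * d)) * c⁻¹ * (g⁻¹ * d⁻¹) * h⁻¹ := by group
    _ = g * h * (d * g⁻¹) * d⁻¹ * h⁻¹ := by rw [← hc' (h * d)]; group
    _ = g * h * g⁻¹ * h⁻¹ := by rw [← hd' g⁻¹]; group

theorem commutatorElement_inv_inv_of_mem_center {x y : G} (h : ⁅x, y⁆ ∈ center G) :
    ⁅x⁻¹, y⁻¹⁆ = ⁅x, y⁆ :=
  calc ⁅x⁻¹, y⁻¹⁆ = (y * x)⁻¹ * (⁅x, y⁆ * (y * x)) := by simp [commutatorElement_def, mul_assoc]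
    _ = ⁅x, y⁆ := by rw [← mem_center_iff.mp h, inv_mul_cancel_left]

theorem commutatorElement_pow_left_of_mem_center {x y : G} (h : ⁅x, y⁆ ∈ center G) (i : ℕ) :
    ⁅x ^ i, y⁆ = ⁅x, y⁆ ^ i := by
  induction i with
  | zero => simp
  | succ i ih =>
    rw [pow_succ', commutatorElement_mul_left_eq_conj_mul, ih,
      mem_center_iff.mp (pow_mem h i), mul_inv_cancel_right, pow_succ]

theorem commutatorElement_pow_right_of_mem_center {x y : G} (h : ⁅x, y⁆ ∈ center G) (j : ℕ) :
    ⁅x, y ^ j⁆ = ⁅x, y⁆ ^ j := by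
  induction j with
  | zero => simp
  | succ j ih =>
    rw [pow_succ', commutatorElement_mul_right_eq_mul_conj, ih, mem_center_iff.mp (pow_mem h j),
      ← mul_assoc, mul_inv_cancel_right, pow_succ]

theorem commutatorElement_pow_pow_of_mem_center {x y : G} (h : ⁅x, y⁆ ∈ center G) (i j : ℕ) :
    ⁅x ^ i, y ^ j⁆ = ⁅x, y⁆ ^ (i * j) := by
  have hi := commutatorElement_pow_left_of_mem_center h i
  rw [commutatorElement_pow_right_of_mem_center (hi ▸ pow_mem h i), hi, pow_mul]

theorem commutator_eq_zpowers_of_closure_pair_eq_top {x y : G} (hc : ⁅x, y⁆ ∈ center G)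
    (hgen : closure {x, y} = ⊤) : commutator G = zpowers ⁅x, y⁆ := by
  have hxy : ⁅x, y⁆ ∈ commutator G := commutator_mem_commutator (mem_top x) (mem_top y)
  have := normal_of_le_center (zpowers_le.mpr hc)
  refine le_antisymm (Normal.quotient_commutative_iff_commutator_le.mp ?_) (zpowers_le.mpr hxy)
  refine isMulCommutative_of_closure_pair_eq_top
    (closure_pair_eq_top_of_surjective (QuotientGroup.mk'_surjective _) hgen) ?_
  rw [← commutatorElement_eq_one_iff_commute, ← map_commutatorElement, QuotientGroup.mk'_apply,
    QuotientGroup.eq_one_iff]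
  exact mem_zpowers _

theorem closure_pair_eq_top_of_abelianization (hclass : commutator G ≤ center G) {x y : G}
    (h : closure {Abelianization.of x} ⊔ closure {Abelianization.of y} = ⊤) :
    closure {x, y} = ⊤ := by
  have hsup : closure {x, y} ⊔ commutator G = ⊤ := by
    rw [← Abelianization.ker_of, ← comap_map_eq, MonoidHom.map_closure, Set.image_pair,
      Set.insert_eq, Subgroup.closure_union, h, comap_top]
  have hdecomp (g : G) : ∃ k ∈ closure {x, y}, ∃ c ∈ commutator G, k * c = g :=
    mem_sup_of_normal_right.mp (hsup ▸ mem_top g)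
  have hle : commutator G ≤ closure {x, y} := by
    rw [commutator_def, commutator_le]
    intro g _ g' _
    obtain ⟨k, hk, c, hc, rfl⟩ := hdecomp g
    obtain ⟨k', hk', c', hc', rfl⟩ := hdecomp g'
    rw [commutatorElement_mul_mul_of_mem_center (hclass hc) (hclass hc')]
    exact (closure {x, y}).commutator_le_self (commutator_mem_commutator hk hk')
  rwa [sup_eq_left.mpr hle] at hsup

end CentralCommutator

section Counting

variable {G : Type*} [Group G]

theorem card_eq_card_abelianization_mul_card_commutator :
    Nat.card G = Nat.card (Abelianization G) * Nat.card (commutator G) :=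
  card_eq_card_quotient_mul_card_subgroup _

theorem finite_and_card_le_of_closure_pair_eq_top_of_commute {x y : G}
    (hgen : closure {x, y} = ⊤) (hxy : Commute x y) {N₁ N₂ : ℕ} (hN₁ : 0 < N₁) (hN₂ : 0 < N₂)
    (hx : x ^ N₁ = 1) (hy : y ^ N₂ = 1) : Finite G ∧ Nat.card G ≤ N₁ * N₂ := by
  have := (isOfFinOrder_iff_pow_eq_one.mpr ⟨N₁, hN₁, hx⟩).finite_zpowers.to_subtype
  have := (isOfFinOrder_iff_pow_eq_one.mpr ⟨N₂, hN₂, hy⟩).finite_zpowers.to_subtype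
  let f := MonoidHom.noncommCoprod (zpowers x).subtype (zpowers y).subtype <| by
    rintro ⟨_, i, rfl⟩ ⟨_, j, rfl⟩
    exact hxy.zpow_zpow i j
  have hf : Function.Surjective f := by
    rw [← MonoidHom.range_eq_top, MonoidHom.noncommCoprod_range, range_subtype, range_subtype,
      zpowers_eq_closure, zpowers_eq_closure, ← Subgroup.closure_union, ← Set.insert_eq, hgen]
  refine ⟨Finite.of_surjective f hf, (Nat.card_le_card_of_surjective f hf).trans ?_⟩
  rw [Nat.card_prod, Nat.card_zpowers, Nat.card_zpowers]
  exact Nat.mul_le_mul (orderOf_le_of_pow_eq_one hN₁ hx) (orderOf_le_of_pow_eq_one hN₂ hy)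

theorem finite_and_card_le_of_commutatorElement_mem_center {x y : G}
    (hgen : closure {x, y} = ⊤) (hc : ⁅x, y⁆ ∈ center G) {M N₁ N₂ : ℕ} (hM : 0 < M)
    (hN₁ : 0 < N₁) (hN₂ : 0 < N₂) (hcM : ⁅x, y⁆ ^ M = 1) (hx : x ^ N₁ ∈ zpowers ⁅x, y⁆)
    (hy : y ^ N₂ ∈ zpowers ⁅x, y⁆) : Finite G ∧ Nat.card G ≤ N₁ * N₂ * M := by
  have hG' := commutator_eq_zpowers_of_closure_pair_eq_top hc hgen
  have hof (g : G) (hg : g ∈ zpowers ⁅x, y⁆) : Abelianization.of g = 1 := by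
    rwa [← MonoidHom.mem_ker, Abelianization.ker_of, hG']
  obtain ⟨hfin, hcard⟩ := finite_and_card_le_of_closure_pair_eq_top_of_commute
    (closure_pair_eq_top_of_surjective QuotientGroup.mk_surjective hgen) (.all _ _) hN₁ hN₂
    (map_pow Abelianization.of x N₁ ▸ hof _ hx) (map_pow Abelianization.of y N₂ ▸ hof _ hy)
  have : Finite (commutator G) := by
    rw [hG']
    exact (isOfFinOrder_iff_pow_eq_one.mpr ⟨M, hM, hcM⟩).finite_zpowers.to_subtype
  have : Finite (G ⧸ commutator G) := hfin
  refine ⟨Finite.of_subgroup_quotient (commutator G), ?_⟩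
  rw [card_eq_card_abelianization_mul_card_commutator, hG', Nat.card_zpowers]
  exact Nat.mul_le_mul hcard (orderOf_le_of_pow_eq_one hM hcM)

end Counting

section PrimePowerOrder

variable {G : Type*} [Group G] {p : ℕ}

theorem zpowers_pow_eq_of_coprime {x : G} {u : ℕ} (hu : u.Coprime (orderOf x)) :
    zpowers (x ^ u) = zpowers x := by
  obtain ⟨v, hv⟩ := exists_pow_eq_self_of_coprime hu
  refine le_antisymm (zpowers_le.mpr (pow_mem (mem_zpowers x) u)) (zpowers_le.mpr ?_)
  have h := pow_mem (mem_zpowers (x ^ u)) v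
  rwa [hv] at h

theorem orderOf_pow_prime_pow (hp : p.Prime) {a : G} {M : ℕ} (ha : orderOf a = p ^ M) (k : ℕ) :
    orderOf (a ^ p ^ k) = p ^ (M - k) := by
  rcases le_total k M with hkM | hMk
  · rw [orderOf_pow_of_dvd (pow_ne_zero k hp.ne_zero) (ha ▸ pow_dvd_pow p hkM), ha,
      Nat.pow_div hkM hp.pos]
  · rw [Nat.sub_eq_zero_of_le hMk, pow_zero, orderOf_eq_one_iff, ← orderOf_dvd_iff_pow_eq_one, ha]
    exact pow_dvd_pow p hMk

theorem exists_not_dvd_pow_eq_of_orderOf (hp : p.Prime) {a b : G} {M S : ℕ}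
    (ha : orderOf a = p ^ M) (hb : orderOf b = p ^ (M - S)) (hS : S ≤ M) (hab : b ∈ zpowers a) :
    ∃ u, ¬ p ∣ u ∧ a ^ (p ^ S * u) = b := by
  have hfin : IsOfFinOrder a := orderOf_pos_iff.mp (ha ▸ pow_pos hp.pos M)
  obtain ⟨t, rfl⟩ : ∃ t : ℕ, a ^ t = b := hfin.mem_powers_iff_mem_zpowers.mpr hab
  rcases hS.eq_or_lt with rfl | hlt
  · refine ⟨1, hp.not_dvd_one, ?_⟩
    rw [Nat.sub_self, pow_zero, orderOf_eq_one_iff] at hb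
    rw [mul_one, ← ha, pow_orderOf_eq_one, hb]
  have ht : t ≠ 0 := by
    rintro rfl
    rw [pow_zero, orderOf_one] at hb
    exact (Nat.one_lt_pow (by omega) hp.one_lt).ne hb
  obtain ⟨k, u, hu, rfl⟩ := Nat.exists_eq_pow_mul_and_not_dvd ht p hp.ne_one
  have hcop : (orderOf (a ^ p ^ k)).Coprime u :=
    orderOf_pow_prime_pow hp ha k ▸ Nat.Coprime.pow_left _ ((hp.coprime_iff_not_dvd).mpr hu)
  rw [pow_mul, hcop.orderOf_pow, orderOf_pow_prime_pow hp ha] at hb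
  have hk : k = S := by
    have := Nat.pow_right_injective hp.two_le hb
    omega
  exact ⟨u, hu, by rw [hk]⟩

theorem exists_not_dvd_pow_eq_pow_of_mem_commutator (hp : p.Prime) {c g : G} {m n s : ℕ}
    (hG' : commutator G = zpowers c) (hc : orderOf c = p ^ m) (hn : 0 < n)
    (hg : orderOf (Abelianization.of g) = p ^ n) (hog : orderOf g = p ^ (m + n - s)) :
    ∃ u, ¬ p ∣ u ∧ g ^ p ^ n = c ^ (p ^ s * u) := by
  have hdvd : p ^ n ∣ orderOf g := hg ▸ orderOf_map_dvd _ g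
  have hle : n ≤ m + n - s := (Nat.pow_dvd_pow_iff_le_right hp.one_lt).mp (hog ▸ hdvd)
  have hmem : g ^ p ^ n ∈ zpowers c := by
    rw [← hG', ← Abelianization.ker_of, MonoidHom.mem_ker, map_pow, ← hg, pow_orderOf_eq_one]
  have hord : orderOf (g ^ p ^ n) = p ^ (m - s) := by
    rw [orderOf_pow_of_dvd (pow_ne_zero _ hp.ne_zero) hdvd, hog, Nat.pow_div hle hp.pos]
    congr 1
    omega
  obtain ⟨u, hu, h⟩ := exists_not_dvd_pow_eq_of_orderOf hp hc hord (by omega) hmem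
  exact ⟨u, hu, h.symm⟩

end PrimePowerOrder

section Presentation

def SatisfiesPgRels (p m n1 n2 s1 s2 : ℕ) {H : Type*} [Group H] (b1 b2 : H) : Prop :=
  let a := b2⁻¹ * b1⁻¹ * b2 * b1
  a ^ p ^ m = 1 ∧ Commute b1 a ∧ Commute b2 a ∧ b1 ^ p ^ n1 = a ^ p ^ s1 ∧ b2 ^ p ^ n2 = a ^ p ^ s2

variable {p m n1 n2 s1 s2 : ℕ} {H : Type*} [Group H]

theorem forall_pgRels_lift_eq_one_iff (b1 b2 : H) :
    (∀ r ∈ pgRels p m n1 n2 s1 s2, FreeGroup.lift ![b1, b2] r = 1) ↔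
      SatisfiesPgRels p m n1 n2 s1 s2 b1 b2 := by
  have hcomm (g a : H) : g⁻¹ * a⁻¹ * g * a = 1 ↔ Commute g a := by
    rw [← Commute.inv_inv_iff, ← commutatorElement_eq_one_iff_commute, commutatorElement_def,
      inv_inv, inv_inv]
  simp only [pgRels, SatisfiesPgRels, Set.mem_insert_iff, Set.mem_singleton_iff, forall_eq_or_imp,
    forall_eq, map_mul, map_inv, map_pow, FreeGroup.lift_apply_of, Matrix.cons_val_zero,
    Matrix.cons_val_one, mul_inv_eq_one, hcomm]

theorem SatisfiesPgRels.finite_and_card_le (hp : 0 < p) {b1 b2 : H}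
    (hgen : closure {b1, b2} = ⊤) (h : SatisfiesPgRels p m n1 n2 s1 s2 b1 b2) :
    Finite H ∧ Nat.card H ≤ p ^ n1 * p ^ n2 * p ^ m := by
  obtain ⟨ham, hb1, hb2, hb1a, hb2a⟩ := h
  set a := b2⁻¹ * b1⁻¹ * b2 * b1
  have ha : a ∈ center H := mem_center_of_closure_pair_eq_top hgen hb1.symm hb2.symm
  have ha' : ⁅b2⁻¹, b1⁻¹⁆ = a := by simp [a, commutatorElement_def]
  have hc : ⁅b2, b1⁆ = a := by
    have h := commutatorElement_inv_inv_of_mem_center (x := b2⁻¹) (y := b1⁻¹) (ha' ▸ ha)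
    rwa [inv_inv, inv_inv, ha'] at h
  rw [Set.pair_comm] at hgen
  rw [← hc] at ha ham hb1a hb2a
  rw [Nat.mul_comm (p ^ n1)]
  exact finite_and_card_le_of_commutatorElement_mem_center hgen ha (pow_pos hp m)
    (pow_pos hp n2) (pow_pos hp n1) ham (hb2a ▸ pow_mem (mem_zpowers _) _)
    (hb1a ▸ pow_mem (mem_zpowers _) _)

theorem GG.closure_of_eq_top_s5 :
    closure {PresentedGroup.of 0, PresentedGroup.of 1} = (⊤ : Subgroup (GG p m n1 n2 s1 s2)) := by
  rw [eq_top_iff, ← PresentedGroup.closure_range_of]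
  refine closure_mono ?_
  rintro _ ⟨i, rfl⟩
  fin_cases i <;> simp

theorem GG.satisfiesPgRels :
    SatisfiesPgRels p m n1 n2 s1 s2 (PresentedGroup.of 0 : GG p m n1 n2 s1 s2)
      (PresentedGroup.of 1) := by
  have hmk : FreeGroup.lift ![PresentedGroup.of 0, PresentedGroup.of 1] =
      PresentedGroup.mk (pgRels p m n1 n2 s1 s2) :=
    FreeGroup.ext_hom _ _ fun i => by fin_cases i <;> rfl
  refine (forall_pgRels_lift_eq_one_iff _ _).mp fun r hr => ?_
  rw [hmk]
  exact PresentedGroup.one_of_mem hr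

end Presentation

theorem exists_generators_satisfiesPgRels {G : Type*} [Group G] {p m n1 n2 s1 s2 : ℕ}
    (hp : p.Prime) (hclass : commutator G ≤ center G) (hm : Nat.card (commutator G) = p ^ m)
    (hn1 : 0 < n1) (hn2 : 0 < n2) {g1 g2 : G} (hgood : GoodPair p n1 n2 g1 g2)
    (ho1 : orderOf g1 = p ^ (m + n1 - s1)) (ho2 : orderOf g2 = p ^ (m + n2 - s2)) :
    ∃ h1 h2 : G, closure {h1, h2} = ⊤ ∧ SatisfiesPgRels p m n1 n2 s1 s2 h1 h2 := by
  obtain ⟨hsup, -, hx1, hx2⟩ := hgood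
  have hgen := closure_pair_eq_top_of_abelianization hclass hsup
  set c := ⁅g2, g1⁆
  have hc : c ∈ center G := hclass (commutator_mem_commutator (mem_top g2) (mem_top g1))
  have hG' : commutator G = zpowers c :=
    commutator_eq_zpowers_of_closure_pair_eq_top hc (Set.pair_comm g1 g2 ▸ hgen)
  have hcm : orderOf c = p ^ m := by rw [← Nat.card_zpowers, ← hG', hm]
  obtain ⟨u1, hu1, e1⟩ := exists_not_dvd_pow_eq_pow_of_mem_commutator hp hG' hcm hn1 hx1 ho1
  obtain ⟨u2, hu2, e2⟩ := exists_not_dvd_pow_eq_pow_of_mem_commutator hp hG' hcm hn2 hx2 ho2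
  have hcop {u n : ℕ} (hu : ¬ p ∣ u) : u.Coprime (p ^ n) :=
    Nat.Coprime.pow_right n ((hp.coprime_iff_not_dvd).mpr hu).symm
  refine ⟨g1 ^ u2, g2 ^ u1, closure_pair_eq_top_of_abelianization hclass ?_, ?_⟩
  · rwa [map_pow, map_pow, ← zpowers_eq_closure, ← zpowers_eq_closure,
      zpowers_pow_eq_of_coprime (hx1 ▸ hcop hu2), zpowers_pow_eq_of_coprime (hx2 ▸ hcop hu1),
      zpowers_eq_closure, zpowers_eq_closure]
  have hA : ⁅g2 ^ u1, g1 ^ u2⁆ = c ^ (u1 * u2) := commutatorElement_pow_pow_of_mem_center hc u1 u2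
  have hA' : (g2 ^ u1)⁻¹ * (g1 ^ u2)⁻¹ * g2 ^ u1 * g1 ^ u2 = c ^ (u1 * u2) := by
    rw [← hA, ← commutatorElement_inv_inv_of_mem_center (hA ▸ pow_mem hc _)]
    simp [commutatorElement_def]
  have hcen : ∀ g : G, Commute g (c ^ (u1 * u2)) := fun g => mem_center_iff.mp (pow_mem hc _) g
  simp only [SatisfiesPgRels, hA']
  refine ⟨?_, hcen _, hcen _, ?_, ?_⟩
  · rw [← pow_mul, mul_comm, pow_mul, ← hcm, pow_orderOf_eq_one, one_pow]
  · rw [← pow_mul, mul_comm, pow_mul, e1, ← pow_mul, ← pow_mul]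
    ring_nf
  · rw [← pow_mul, mul_comm, pow_mul, e2, ← pow_mul, ← pow_mul]
    ring_nf

theorem invariants_give_presentation_general
    (p : ℕ) (hp : p.Prime) (G : Type*) [Group G]
    (hclass : commutator G ≤ Subgroup.center G)
    (m n1 n2 s1 s2 : ℕ)
    (hm : Nat.card ↥(commutator G) = p ^ m)
    (hn2 : 0 < n2) (hn12 : n2 ≤ n1)
    (hab : Nonempty (Abelianization G ≃*
      Multiplicative (ZMod (p ^ n1)) × Multiplicative (ZMod (p ^ n2))))
    (hmax : IsLexMaxOrders G p n1 n2 (p ^ (m + n1 - s1)) (p ^ (m + n2 - s2))) :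
    Nonempty (G ≃* GG p m n1 n2 s1 s2) := by
  obtain ⟨g1, g2, hgood, ho1, ho2⟩ := hmax.1
  obtain ⟨h1, h2, hgen, hrels⟩ :=
    exists_generators_satisfiesPgRels hp hclass hm (hn2.trans_le hn12) hn2 hgood ho1 ho2
  set φ := PresentedGroup.toGroup ((forall_pgRels_lift_eq_one_iff h1 h2).mpr hrels)
  have hφ : Function.Surjective φ := by
    rw [← MonoidHom.range_eq_top, eq_top_iff, ← hgen, closure_le]
    rintro _ (rfl | rfl)
    exacts [⟨.of 0, by simp [φ]⟩, ⟨.of 1, by simp [φ]⟩]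
  obtain ⟨hfin, hcard⟩ : Finite (GG p m n1 n2 s1 s2) ∧ _ := GG.satisfiesPgRels.finite_and_card_le hp.pos GG.closure_of_eq_top_s5
  have hG : Nat.card G = p ^ n1 * p ^ n2 * p ^ m := by
    rw [card_eq_card_abelianization_mul_card_commutator, Nat.card_congr (hab.some.toEquiv.trans
      (Multiplicative.toAdd.prodCongr Multiplicative.toAdd)), Nat.card_prod, Nat.card_zmod,
      Nat.card_zmod, hm]
  exact ⟨(MulEquiv.ofBijective φ (hφ.bijective_of_nat_card_le (hcard.trans hG.ge))).symm⟩

/-- If `G` is a finite `p`-group of nilpotency class exactly 2 with `|G'| = p^m`,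
`G/G' ≅ C_{p^n1} × C_{p^n2}` (`0 < n2 ≤ n1`), and `(p^(m+n1-s1), p^(m+n2-s2))` is the
lexicographic maximum of the pairs of orders of suitable generating pairs,
then `G ≅ G_p(m,n1,n2,s1,s2)`. -/
theorem invariants_give_presentation
    (p : ℕ) (hp : p.Prime) (G : Type*) [Group G] [Finite G] (hGp : IsPGroup p G)
    (hclass : commutator G ≤ Subgroup.center G) (hnt : commutator G ≠ ⊥)
    (m n1 n2 s1 s2 : ℕ)
    (hm : Nat.card ↥(commutator G) = p ^ m)
    (hn2 : 0 < n2) (hn12 : n2 ≤ n1)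
    (hab : Nonempty (Abelianization G ≃*
      Multiplicative (ZMod (p ^ n1)) × Multiplicative (ZMod (p ^ n2))))
    (hmax : IsLexMaxOrders G p n1 n2 (p ^ (m + n1 - s1)) (p ^ (m + n2 - s2))) :
    Nonempty (G ≃* GG p m n1 n2 s1 s2) :=
  invariants_give_presentation_general p hp G hclass m n1 n2 s1 s2 hm hn2 hn12 hab hmax
end

section
/- Let p be a prime and (m,n1,n2,s1,s2) an admissible tuple for p. Then the group G_p(m,n1,n2,s1,s2) has order p^(m+n1+n2). -/
namespace CardAux

variable (p m n1 n2 s1 s2 : ℕ)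

abbrev MS := ZMod (p ^ m) × ZMod (p ^ n1) × ZMod (p ^ n2)

def d1 (j : ZMod (p ^ n1)) : ZMod (p ^ m) :=
  if p ^ n1 ∣ j.val + 1 then ((p ^ s1 : ℕ) : ZMod (p ^ m)) else 0

def d2 (k : ZMod (p ^ n2)) : ZMod (p ^ m) :=
  if p ^ n2 ∣ k.val + 1 then ((p ^ s2 : ℕ) : ZMod (p ^ m)) else 0

def L1 : Equiv.Perm (MS p m n1 n2) where
  toFun x := (x.1 + d1 p m n1 s1 x.2.1, x.2.1 + 1, x.2.2)
  invFun x := (x.1 - d1 p m n1 s1 (x.2.1 - 1), x.2.1 - 1, x.2.2)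
  left_inv x := by simp
  right_inv x := by simp

def L2 : Equiv.Perm (MS p m n1 n2) where
  toFun x := (x.1 + (x.2.1.val : ZMod (p ^ m)) + d2 p m n2 s2 x.2.2, x.2.1, x.2.2 + 1)
  invFun x := (x.1 - (x.2.1.val : ZMod (p ^ m)) - d2 p m n2 s2 (x.2.2 - 1), x.2.1, x.2.2 - 1)
  left_inv x := by simp [Prod.ext_iff]; ring
  right_inv x := by simp [Prod.ext_iff]; ring

def T : Equiv.Perm (MS p m n1 n2) where
  toFun x := (x.1 + 1, x.2)
  invFun x := (x.1 - 1, x.2)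
  left_inv x := by simp
  right_inv x := by simp

theorem cast_mod (u : ℕ) (hu : m ≤ u) (a : ℕ) :
    ((a % p ^ u : ℕ) : ZMod (p ^ m)) = (a : ZMod (p ^ m)) := by
  conv_rhs => rw [← Nat.div_add_mod a (p ^ u)]
  rw [Nat.cast_add, Nat.cast_mul,
    (ZMod.natCast_eq_zero_iff _ _).2 (pow_dvd_pow p hu), zero_mul, zero_add]

theorem val_add_nat {n : ℕ} [NeZero n] (j : ZMod n) (t : ℕ) :
    (j + (t : ZMod n)).val = (j.val + t) % n := by
  rw [ZMod.val_add, ZMod.val_natCast]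
  conv_rhs => rw [Nat.add_mod, Nat.mod_eq_of_lt (ZMod.val_lt j)]

theorem dvd_val_iff {n : ℕ} [NeZero n] (j : ZMod n) (t : ℕ) :
    (n ∣ (j + (t : ZMod n)).val + 1) ↔ (n ∣ j.val + t + 1) := by
  rw [val_add_nat]
  have h : (j.val + t) % n + 1 ≡ j.val + t + 1 [MOD n] :=
    (Nat.mod_modEq (j.val + t) n).add_right 1
  constructor
  · intro hd
    exact (Nat.modEq_zero_iff_dvd).1 (h.symm.trans ((Nat.modEq_zero_iff_dvd).2 hd))
  · intro hd
    exact (Nat.modEq_zero_iff_dvd).1 (h.trans ((Nat.modEq_zero_iff_dvd).2 hd))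

theorem T_pow (t : ℕ) (x : MS p m n1 n2) :
    ((T p m n1 n2) ^ t) x = (x.1 + (t : ZMod (p ^ m)), x.2) := by
  induction t with
  | zero => simp
  | succ t ih =>
      rw [pow_succ', Equiv.Perm.mul_apply, ih]
      simp [T, Prod.ext_iff]
      push_cast
      ring

theorem L1_pow [NeZero (p ^ n1)] (t : ℕ) (x : MS p m n1 n2) :
    ((L1 p m n1 n2 s1) ^ t) x
      = (x.1 + (((x.2.1.val + t) / p ^ n1 * p ^ s1 : ℕ) : ZMod (p ^ m)),
         x.2.1 + (t : ZMod (p ^ n1)), x.2.2) := by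
  induction t with
  | zero => simp [Nat.div_eq_of_lt (ZMod.val_lt x.2.1)]
  | succ t ih =>
      rw [pow_succ', Equiv.Perm.mul_apply, ih]
      have hd : d1 p m n1 s1 (x.2.1 + (t : ZMod (p ^ n1)))
          = if p ^ n1 ∣ x.2.1.val + t + 1 then ((p ^ s1 : ℕ) : ZMod (p ^ m)) else 0 := by
        rw [d1]
        by_cases hc : p ^ n1 ∣ x.2.1.val + t + 1
        · rw [if_pos ((dvd_val_iff _ _).2 hc), if_pos hc]
        · rw [if_neg (fun hh => hc ((dvd_val_iff _ _).1 hh)), if_neg hc]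
      have hsucc : x.2.1.val + (t + 1) = (x.2.1.val + t) + 1 := by omega
      rw [hsucc, Nat.succ_div]
      show (_ + _ + d1 _ _ _ _ _, _ + _ + 1, _) = _
      rw [hd]
      by_cases hc : p ^ n1 ∣ x.2.1.val + t + 1
      · rw [if_pos hc, if_pos hc]
        simp only [Prod.mk.injEq]
        refine ⟨by push_cast; ring, ?_, ?_⟩ <;> first | trivial | (push_cast; ring)
      · rw [if_neg hc, if_neg hc]
        simp only [Prod.mk.injEq]
        refine ⟨by push_cast; ring, ?_, ?_⟩ <;> first | trivial | (push_cast; ring)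

theorem L2_pow [NeZero (p ^ n2)] (t : ℕ) (x : MS p m n1 n2) :
    ((L2 p m n1 n2 s2) ^ t) x
      = (x.1 + ((t * x.2.1.val + (x.2.2.val + t) / p ^ n2 * p ^ s2 : ℕ) : ZMod (p ^ m)),
         x.2.1, x.2.2 + (t : ZMod (p ^ n2))) := by
  induction t with
  | zero => simp [Nat.div_eq_of_lt (ZMod.val_lt x.2.2)]
  | succ t ih =>
      rw [pow_succ', Equiv.Perm.mul_apply, ih]
      have hd : d2 p m n2 s2 (x.2.2 + (t : ZMod (p ^ n2)))
          = if p ^ n2 ∣ x.2.2.val + t + 1 then ((p ^ s2 : ℕ) : ZMod (p ^ m)) else 0 := by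
        rw [d2]
        by_cases hc : p ^ n2 ∣ x.2.2.val + t + 1
        · rw [if_pos ((dvd_val_iff _ _).2 hc), if_pos hc]
        · rw [if_neg (fun hh => hc ((dvd_val_iff _ _).1 hh)), if_neg hc]
      have hsucc : x.2.2.val + (t + 1) = (x.2.2.val + t) + 1 := by omega
      rw [hsucc, Nat.succ_div]
      show (_ + _ + _ + d2 _ _ _ _ _, _, _ + _ + 1) = _
      rw [hd]
      by_cases hc : p ^ n2 ∣ x.2.2.val + t + 1
      · rw [if_pos hc, if_pos hc]
        simp only [Prod.mk.injEq]
        refine ⟨by push_cast; ring, ?_, ?_⟩ <;> first | trivial | (push_cast; ring)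
      · rw [if_neg hc, if_neg hc]
        simp only [Prod.mk.injEq]
        refine ⟨by push_cast; ring, ?_, ?_⟩ <;> first | trivial | (push_cast; ring)

def pf : Fin 2 → Equiv.Perm (MS p m n1 n2) := ![L1 p m n1 n2 s1, L2 p m n1 n2 s2]

theorem lift_a (hmn1 : m ≤ n1) [NeZero (p ^ n1)] :
    FreeGroup.lift (pf p m n1 n2 s1 s2)
      ((FreeGroup.of 1)⁻¹ * (FreeGroup.of 0)⁻¹ * FreeGroup.of 1 * FreeGroup.of 0)
      = T p m n1 n2 := by
  have hc : ∀ j : ZMod (p ^ n1),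
      (((j + 1).val : ℕ) : ZMod (p ^ m)) = ((j.val : ℕ) : ZMod (p ^ m)) + 1 := by
    intro j
    have h2 := val_add_nat j 1
    rw [Nat.cast_one] at h2
    rw [h2, cast_mod p m n1 hmn1, Nat.cast_add, Nat.cast_one]
  apply Equiv.ext
  intro x
  obtain ⟨x1, x2, x3⟩ := x
  simp only [map_mul, map_inv, FreeGroup.lift_apply_of, pf, Matrix.cons_val_zero, Matrix.cons_val_one,
    Matrix.head_cons, Equiv.Perm.mul_apply]
  simp only [Equiv.Perm.inv_def, L1, L2, T, Equiv.coe_fn_mk, Equiv.coe_fn_symm_mk]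
  simp only [add_sub_cancel_right, Prod.mk.injEq, and_true, true_and, and_self]
  rw [hc]
  ring

theorem T_comm_L1 : L1 p m n1 n2 s1 * T p m n1 n2 = T p m n1 n2 * L1 p m n1 n2 s1 := by
  apply Equiv.ext
  intro ⟨x1, x2, x3⟩
  simp only [Equiv.Perm.mul_apply, L1, T, Equiv.coe_fn_mk, Prod.mk.injEq, and_true, true_and,
    and_self]
  ring

theorem T_comm_L2 : L2 p m n1 n2 s2 * T p m n1 n2 = T p m n1 n2 * L2 p m n1 n2 s2 := by
  apply Equiv.ext
  intro ⟨x1, x2, x3⟩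
  simp only [Equiv.Perm.mul_apply, L2, T, Equiv.coe_fn_mk, Prod.mk.injEq, and_true, true_and,
    and_self]
  ring

theorem T_order : (T p m n1 n2) ^ p ^ m = 1 := by
  apply Equiv.ext
  intro x
  rw [T_pow]
  simp [ZMod.natCast_self]

theorem L1_pow_eq [NeZero (p ^ n1)] :
    (L1 p m n1 n2 s1) ^ p ^ n1 = (T p m n1 n2) ^ p ^ s1 := by
  apply Equiv.ext
  intro x
  rw [L1_pow, T_pow]
  have hpos : 0 < p ^ n1 := Nat.pos_of_ne_zero (NeZero.ne _)
  rw [Nat.add_div_right _ hpos, Nat.div_eq_of_lt (ZMod.val_lt x.2.1), zero_add, one_mul,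
    ZMod.natCast_self, add_zero]

theorem L2_pow_eq (hmn2 : m ≤ n2) [NeZero (p ^ n2)] :
    (L2 p m n1 n2 s2) ^ p ^ n2 = (T p m n1 n2) ^ p ^ s2 := by
  apply Equiv.ext
  intro x
  rw [L2_pow, T_pow]
  have hpos : 0 < p ^ n2 := Nat.pos_of_ne_zero (NeZero.ne _)
  rw [Nat.add_div_right _ hpos, Nat.div_eq_of_lt (ZMod.val_lt x.2.2), zero_add, one_mul,
    Nat.cast_add, Nat.mul_comm,
    (ZMod.natCast_eq_zero_iff _ _).2 (Dvd.dvd.mul_left (pow_dvd_pow p hmn2) _),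
    zero_add, ZMod.natCast_self, add_zero]

theorem rels_check (hmn1 : m ≤ n1) (hmn2 : m ≤ n2) [NeZero (p ^ n1)] [NeZero (p ^ n2)] :
    ∀ r ∈ pgRels p m n1 n2 s1 s2, FreeGroup.lift (pf p m n1 n2 s1 s2) r = 1 := by
  intro r hr
  simp only [pgRels, Set.mem_insert_iff, Set.mem_singleton_iff] at hr
  have hca := lift_a p m n1 n2 s1 s2 hmn1
  rcases hr with rfl | rfl | rfl | rfl | rfl
  · rw [map_pow, hca, T_order]
  · rw [map_mul, map_mul, map_mul, map_inv, map_inv, hca, FreeGroup.lift_apply_of]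
    have hL1 : pf p m n1 n2 s1 s2 0 = L1 p m n1 n2 s1 := rfl
    rw [hL1]
    have c := T_comm_L1 p m n1 n2 s1
    calc (L1 p m n1 n2 s1)⁻¹ * (T p m n1 n2)⁻¹ * L1 p m n1 n2 s1 * T p m n1 n2
        = (T p m n1 n2 * L1 p m n1 n2 s1)⁻¹ * (L1 p m n1 n2 s1 * T p m n1 n2) := by group
      _ = (L1 p m n1 n2 s1 * T p m n1 n2)⁻¹ * (L1 p m n1 n2 s1 * T p m n1 n2) := by rw [c]
      _ = 1 := inv_mul_cancel _
  · rw [map_mul, map_mul, map_mul, map_inv, map_inv, hca, FreeGroup.lift_apply_of]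
    have hL2 : pf p m n1 n2 s1 s2 1 = L2 p m n1 n2 s2 := rfl
    rw [hL2]
    have c := T_comm_L2 p m n1 n2 s2
    calc (L2 p m n1 n2 s2)⁻¹ * (T p m n1 n2)⁻¹ * L2 p m n1 n2 s2 * T p m n1 n2
        = (T p m n1 n2 * L2 p m n1 n2 s2)⁻¹ * (L2 p m n1 n2 s2 * T p m n1 n2) := by group
      _ = (L2 p m n1 n2 s2 * T p m n1 n2)⁻¹ * (L2 p m n1 n2 s2 * T p m n1 n2) := by rw [c]
      _ = 1 := inv_mul_cancel _
  · rw [map_mul, map_inv, map_pow, map_pow, hca, FreeGroup.lift_apply_of]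
    have hL1 : pf p m n1 n2 s1 s2 0 = L1 p m n1 n2 s1 := rfl
    rw [hL1, L1_pow_eq, mul_inv_cancel]
  · rw [map_mul, map_inv, map_pow, map_pow, hca, FreeGroup.lift_apply_of]
    have hL2 : pf p m n1 n2 s1 s2 1 = L2 p m n1 n2 s2 := rfl
    rw [hL2, L2_pow_eq p m n1 n2 s2 hmn2, mul_inv_cancel]

end CardAux

/-- For an admissible tuple, the group `G_p(m,n1,n2,s1,s2)` has order `p^(m+n1+n2)`. -/
theorem card_of_presented_group
    (p : ℕ) (hp : p.Prime) (m n1 n2 s1 s2 : ℕ) (h : Admissible p m n1 n2 s1 s2) :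
    Nat.card (GG p m n1 n2 s1 s2) = p ^ (m + n1 + n2) := by
  obtain ⟨⟨hm0, hs1m, hs2m, hmn2, hn2n1⟩, -, -, -⟩ := h
  have hmn1 : m ≤ n1 := le_trans hmn2 hn2n1
  haveI i0 : NeZero (p ^ m) := ⟨pow_ne_zero _ hp.ne_zero⟩
  haveI i1 : NeZero (p ^ n1) := ⟨pow_ne_zero _ hp.ne_zero⟩
  haveI i2 : NeZero (p ^ n2) := ⟨pow_ne_zero _ hp.ne_zero⟩
  set rels := pgRels p m n1 n2 s1 s2 with hrels
  set B1 : GG p m n1 n2 s1 s2 := PresentedGroup.of 0 with hB1def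
  set B2 : GG p m n1 n2 s1 s2 := PresentedGroup.of 1 with hB2def
  set wa : FreeGroup (Fin 2) :=
    (FreeGroup.of 1)⁻¹ * (FreeGroup.of 0)⁻¹ * FreeGroup.of 1 * FreeGroup.of 0 with hwa
  set A : GG p m n1 n2 s1 s2 := PresentedGroup.mk rels wa with hAdef0
  have hAdef : A = B2⁻¹ * B1⁻¹ * B2 * B1 := by
    rw [hAdef0, hwa, map_mul, map_mul, map_mul, map_inv, map_inv]; rfl
  have mk_rel : ∀ r ∈ rels, PresentedGroup.mk rels r = 1 := fun r hr =>
    (QuotientGroup.eq_one_iff r).2 (Subgroup.subset_normalClosure hr)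
  -- the five relations
  have mem1 : wa ^ p ^ m ∈ rels := by rw [hrels]; simp [pgRels, hwa]
  have mem2 : (FreeGroup.of 0)⁻¹ * wa⁻¹ * FreeGroup.of 0 * wa ∈ rels := by
    rw [hrels]; simp [pgRels, hwa]
  have mem3 : (FreeGroup.of 1)⁻¹ * wa⁻¹ * FreeGroup.of 1 * wa ∈ rels := by
    rw [hrels]; simp [pgRels, hwa]
  have mem4 : (FreeGroup.of 0) ^ p ^ n1 * (wa ^ p ^ s1)⁻¹ ∈ rels := by
    rw [hrels]; simp [pgRels, hwa]
  have mem5 : (FreeGroup.of 1) ^ p ^ n2 * (wa ^ p ^ s2)⁻¹ ∈ rels := by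
    rw [hrels]; simp [pgRels, hwa]
  have hAord : A ^ p ^ m = 1 := by
    have := mk_rel _ mem1; rwa [map_pow] at this
  have hrel2 : B1⁻¹ * A⁻¹ * B1 * A = 1 := by
    have := mk_rel _ mem2
    rwa [map_mul, map_mul, map_mul, map_inv, map_inv] at this
  have hrel3 : B2⁻¹ * A⁻¹ * B2 * A = 1 := by
    have := mk_rel _ mem3
    rwa [map_mul, map_mul, map_mul, map_inv, map_inv] at this
  have h4 : B1 ^ p ^ n1 = A ^ p ^ s1 := by
    have := mk_rel _ mem4
    rw [map_mul, map_inv, map_pow, map_pow] at this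
    exact mul_inv_eq_one.mp this
  have h5 : B2 ^ p ^ n2 = A ^ p ^ s2 := by
    have := mk_rel _ mem5
    rw [map_mul, map_inv, map_pow, map_pow] at this
    exact mul_inv_eq_one.mp this
  -- commutation
  have hcB1A : Commute B1 A := by
    have e : A⁻¹ * (B1 * A) = B1 := by
      have := congrArg (fun z => B1 * z) hrel2
      simpa [mul_assoc] using this
    show B1 * A = A * B1
    have := congrArg (fun z => A * z) e
    simpa [mul_assoc] using this
  have hcB2A : Commute B2 A := by
    have e : A⁻¹ * (B2 * A) = B2 := by
      have := congrArg (fun z => B2 * z) hrel3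
      simpa [mul_assoc] using this
    show B2 * A = A * B2
    have := congrArg (fun z => A * z) e
    simpa [mul_assoc] using this
  have hAc : ∀ g : GG p m n1 n2 s1 s2, Commute g A := by
    intro g
    have hg : g ∈ Subgroup.closure
        (Set.range (PresentedGroup.of : Fin 2 → GG p m n1 n2 s1 s2)) := by
      rw [PresentedGroup.closure_range_of]; exact Subgroup.mem_top g
    induction hg using Subgroup.closure_induction with
    | mem x hx =>
        obtain ⟨t, rfl⟩ := hx
        fin_cases t
        · exact hcB1A
        · exact hcB2A
    | one => exact Commute.one_left A
    | mul x y hx hy cx cy => exact cx.mul_left cy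
    | inv x hx cx => exact cx.inv_left
  have move : ∀ (x : GG p m n1 n2 s1 s2) (i k : ℕ), A ^ i * (x * A ^ k) = A ^ (i + k) * x := by
    intro x i k
    rw [((hAc x).pow_right k).eq, ← mul_assoc, ← pow_add]
  have hBB : B2 * B1 = B1 * B2 * A := by rw [hAdef]; group
  have lemBB : ∀ t : ℕ, B2 ^ t * B1 = B1 * B2 ^ t * A ^ t := by
    intro t
    induction t with
    | zero => simp
    | succ t ih =>
        calc B2 ^ (t + 1) * B1 = B2 ^ t * (B2 * B1) := by rw [pow_succ, mul_assoc]
          _ = B2 ^ t * (B1 * B2 * A) := by rw [hBB]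
          _ = (B2 ^ t * B1) * B2 * A := by simp only [mul_assoc]
          _ = (B1 * B2 ^ t * A ^ t) * B2 * A := by rw [ih]
          _ = B1 * B2 ^ t * (A ^ t * B2) * A := by simp only [mul_assoc]
          _ = B1 * B2 ^ t * (B2 * A ^ t) * A := by rw [((hAc B2).symm.pow_left t).eq]
          _ = B1 * B2 ^ (t + 1) * A ^ (t + 1) := by rw [pow_succ, pow_succ]; simp only [mul_assoc]
  -- normal form predicate
  set P : GG p m n1 n2 s1 s2 → Prop :=
    fun g => ∃ i j k : ℕ, g = A ^ i * B1 ^ j * B2 ^ k with hPdef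
  have keyB1 : ∀ g, P g → P (g * B1) := by
    rintro g ⟨i, j, k, rfl⟩
    refine ⟨i + k, j + 1, k, ?_⟩
    calc A ^ i * B1 ^ j * B2 ^ k * B1 = A ^ i * (B1 ^ j * (B2 ^ k * B1)) := by
          simp only [mul_assoc]
      _ = A ^ i * (B1 ^ j * (B1 * B2 ^ k * A ^ k)) := by rw [lemBB]
      _ = A ^ i * ((B1 ^ (j + 1) * B2 ^ k) * A ^ k) := by rw [pow_succ]; simp only [mul_assoc]
      _ = A ^ (i + k) * (B1 ^ (j + 1) * B2 ^ k) := move _ i k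
      _ = A ^ (i + k) * B1 ^ (j + 1) * B2 ^ k := by rw [mul_assoc]
  have keyB2 : ∀ g, P g → P (g * B2) := by
    rintro g ⟨i, j, k, rfl⟩
    exact ⟨i, j, k + 1, by rw [mul_assoc, ← pow_succ]⟩
  have keyB1pow : ∀ (t : ℕ) (g), P g → P (g * B1 ^ t) := by
    intro t
    induction t with
    | zero => intro g hg; simpa using hg
    | succ t ih =>
        intro g hg
        rw [pow_succ, ← mul_assoc]
        exact keyB1 _ (ih _ hg)
  have keyB2pow : ∀ (t : ℕ) (g), P g → P (g * B2 ^ t) := by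
    intro t
    induction t with
    | zero => intro g hg; simpa using hg
    | succ t ih =>
        intro g hg
        rw [pow_succ, ← mul_assoc]
        exact keyB2 _ (ih _ hg)
  have hc1pos : 0 < p ^ n1 * p ^ m := Nat.mul_pos (pow_pos hp.pos _) (pow_pos hp.pos _)
  have hc2pos : 0 < p ^ n2 * p ^ m := Nat.mul_pos (pow_pos hp.pos _) (pow_pos hp.pos _)
  have hord1 : B1 ^ (p ^ n1 * p ^ m) = 1 := by
    rw [pow_mul, h4, ← pow_mul, mul_comm (p ^ s1), pow_mul, hAord, one_pow]
  have hord2 : B2 ^ (p ^ n2 * p ^ m) = 1 := by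
    rw [pow_mul, h5, ← pow_mul, mul_comm (p ^ s2), pow_mul, hAord, one_pow]
  have hinv1 : B1⁻¹ = B1 ^ (p ^ n1 * p ^ m - 1) := by
    refine (inv_eq_of_mul_eq_one_right ?_)
    rw [← pow_succ', Nat.sub_add_cancel hc1pos, hord1]
  have hinv2 : B2⁻¹ = B2 ^ (p ^ n2 * p ^ m - 1) := by
    refine (inv_eq_of_mul_eq_one_right ?_)
    rw [← pow_succ', Nat.sub_add_cancel hc2pos, hord2]
  have hP : ∀ g : GG p m n1 n2 s1 s2, P g := by
    intro g
    have hg : g ∈ Subgroup.closure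
        (Set.range (PresentedGroup.of : Fin 2 → GG p m n1 n2 s1 s2)) := by
      rw [PresentedGroup.closure_range_of]; exact Subgroup.mem_top g
    induction hg using Subgroup.closure_induction_right with
    | one => exact ⟨0, 0, 0, by simp⟩
    | mul_right x hx y hy px =>
        obtain ⟨t, rfl⟩ := hy
        fin_cases t
        · exact keyB1 _ px
        · exact keyB2 _ px
    | mul_inv_cancel x hx y hy px =>
        obtain ⟨t, rfl⟩ := hy
        fin_cases t
        · show P (x * B1⁻¹)
          rw [hinv1]
          exact keyB1pow _ _ px
        · show P (x * B2⁻¹)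
          rw [hinv2]
          exact keyB2pow _ _ px
  -- reduction of exponents
  have redA : ∀ t : ℕ, A ^ t = A ^ (t % p ^ m) := by
    intro t
    conv_lhs => rw [← Nat.div_add_mod t (p ^ m)]
    rw [pow_add, pow_mul, hAord, one_pow, one_mul]
  have redB1 : ∀ t : ℕ, B1 ^ t = A ^ (p ^ s1 * (t / p ^ n1)) * B1 ^ (t % p ^ n1) := by
    intro t
    conv_lhs => rw [← Nat.div_add_mod t (p ^ n1)]
    rw [pow_add, pow_mul, h4, ← pow_mul]
  have redB2 : ∀ t : ℕ, B2 ^ t = A ^ (p ^ s2 * (t / p ^ n2)) * B2 ^ (t % p ^ n2) := by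
    intro t
    conv_lhs => rw [← Nat.div_add_mod t (p ^ n2)]
    rw [pow_add, pow_mul, h5, ← pow_mul]
  -- the bijection
  set Fm : CardAux.MS p m n1 n2 → GG p m n1 n2 s1 s2 :=
    fun x => A ^ x.1.val * B1 ^ x.2.1.val * B2 ^ x.2.2.val with hFm
  have hsurj : Function.Surjective Fm := by
    intro g
    obtain ⟨i, j, k, rfl⟩ := hP g
    refine ⟨((i + p ^ s1 * (j / p ^ n1) + p ^ s2 * (k / p ^ n2) : ℕ),
      (j : ZMod (p ^ n1)), (k : ZMod (p ^ n2))), ?_⟩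
    rw [hFm]
    simp only [ZMod.val_natCast]
    rw [← redA]
    conv_rhs => rw [redB1 j, redB2 k]
    calc A ^ (i + p ^ s1 * (j / p ^ n1) + p ^ s2 * (k / p ^ n2)) * B1 ^ (j % p ^ n1)
          * B2 ^ (k % p ^ n2)
        = A ^ (i + p ^ s1 * (j / p ^ n1)) * (B1 ^ (j % p ^ n1) * A ^ (p ^ s2 * (k / p ^ n2)))
          * B2 ^ (k % p ^ n2) := by
          rw [((hAc (B1 ^ (j % p ^ n1))).pow_right _).eq, ← mul_assoc, ← pow_add]
      _ = A ^ i * (A ^ (p ^ s1 * (j / p ^ n1)) * B1 ^ (j % p ^ n1))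
          * (A ^ (p ^ s2 * (k / p ^ n2)) * B2 ^ (k % p ^ n2)) := by
          rw [pow_add]; simp only [mul_assoc]
  set ψ := PresentedGroup.toGroup (CardAux.rels_check p m n1 n2 s1 s2 hmn1 hmn2) with hψ
  have hψA : ψ A = CardAux.T p m n1 n2 := by
    have h0 : ψ A = FreeGroup.lift (CardAux.pf p m n1 n2 s1 s2) wa := rfl
    rw [h0, hwa, CardAux.lift_a p m n1 n2 s1 s2 hmn1]
  have hψB1 : ψ B1 = CardAux.L1 p m n1 n2 s1 := by
    rw [hB1def, hψ, PresentedGroup.toGroup.of]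
    rfl
  have hψB2 : ψ B2 = CardAux.L2 p m n1 n2 s2 := by
    rw [hB2def, hψ, PresentedGroup.toGroup.of]
    rfl
  have hev : ∀ x : CardAux.MS p m n1 n2, ψ (Fm x) (0, 0, 0) = x := by
    intro x
    obtain ⟨x1, x2, x3⟩ := x
    rw [hFm, map_mul, map_mul, map_pow, map_pow, map_pow, hψA, hψB1, hψB2,
      Equiv.Perm.mul_apply, Equiv.Perm.mul_apply, CardAux.L2_pow, CardAux.L1_pow,
      CardAux.T_pow]
    simp [ZMod.val_zero, Nat.div_eq_of_lt (ZMod.val_lt x2), Nat.div_eq_of_lt (ZMod.val_lt x3),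
      ZMod.natCast_zmod_val]
  have hinj : Function.Injective Fm := by
    intro x y hxy
    have hx := hev x
    rw [hxy, hev y] at hx
    exact hx.symm
  rw [← Nat.card_eq_of_bijective Fm ⟨hinj, hsurj⟩]
  rw [Nat.card_prod, Nat.card_prod, Nat.card_zmod, Nat.card_zmod, Nat.card_zmod,
    pow_add, pow_add, mul_assoc]
end

section
/- Let p be a prime and (m,n1,n2,s1,s2) an admissible tuple for p, and let G = G_p(m,n1,n2,s1,s2) with generators b1, b2. Then the commutator subgroup G' is the cyclic subgroup generated by [b2,b1] and has order p^m. -/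
open scoped commutatorElement

theorem commutatorElement_inv_inv_s8 {G : Type*} [Group G] (x y : G) :
    ⁅x⁻¹, y⁻¹⁆ = x⁻¹ * y⁻¹ * x * y := by
  rw [commutatorElement_def, inv_inv, inv_inv]

namespace Subgroup

variable {G : Type*} [Group G]

theorem normal_of_le_center_s8 {H : Subgroup G} (hH : H ≤ center G) : H.Normal where
  conj_mem n hn g := by rw [mem_center_iff.mp (hH hn) g, mul_inv_cancel_right]; exact hn

theorem mem_center_of_closure_pair_eq_top {x y c : G} (hxy : closure {x, y} = ⊤)
    (hx : Commute x c) (hy : Commute y c) : c ∈ center G := by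
  simp [center_eq_iInf hxy, mem_iInf, mem_centralizer_singleton_iff, hx.eq, hy.eq]

theorem isMulCommutative_of_closure_pair_eq_top {x y : G} (hxy : closure {x, y} = ⊤)
    (h : Commute x y) : IsMulCommutative G := by
  rw [← center_eq_top_iff, eq_top_iff, ← hxy, closure_le, Set.pair_subset_iff]
  exact ⟨mem_center_of_closure_pair_eq_top hxy (.refl x) h.symm,
    mem_center_of_closure_pair_eq_top hxy h (.refl y)⟩

theorem commutator_eq_closure_commutatorElement {x y : G} (hxy : closure {x, y} = ⊤)
    (hx : Commute x ⁅x, y⁆) (hy : Commute y ⁅x, y⁆) :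
    _root_.commutator G = closure {⁅x, y⁆} := by
  have hK : closure {⁅x, y⁆} ≤ center G := closure_le _ |>.mpr <|
    Set.singleton_subset_iff.mpr <| mem_center_of_closure_pair_eq_top hxy hx hy
  have := normal_of_le_center_s8 hK
  refine le_antisymm (Normal.quotient_commutative_iff_commutator_le.mp ?_) ?_
  · let q := QuotientGroup.mk' (closure {⁅x, y⁆})
    refine isMulCommutative_of_closure_pair_eq_top (x := q x) (y := q y) ?_ ?_
    · rw [← Set.image_pair, ← MonoidHom.map_closure, hxy, ← MonoidHom.range_eq_map,
        MonoidHom.range_eq_top]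
      exact QuotientGroup.mk'_surjective _
    · rw [← commutatorElement_eq_one_iff_commute, ← map_commutatorElement,
        QuotientGroup.mk'_apply, QuotientGroup.eq_one_iff]
      exact subset_closure rfl
  · exact closure_le _ |>.mpr <| Set.singleton_subset_iff.mpr <|
      commutator_mem_commutator (mem_top x) (mem_top y)

end Subgroup

theorem PresentedGroup.closure_of_zero_of_one_eq_top (rels : Set (FreeGroup (Fin 2))) :
    Subgroup.closure {of 0, of 1} = (⊤ : Subgroup (PresentedGroup rels)) := by
  rw [← closure_range_of]
  congr
  ext
  simp [Fin.exists_fin_two, eq_comm]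

/-- `⟨x, y, z⟩` is the unitriangular matrix `[[1, y, z], [0, 1, x], [0, 0, 1]]`. -/
@[ext] structure IntHeisenberg where
  x : ℤ
  y : ℤ
  z : ℤ

namespace IntHeisenberg

instance : Mul IntHeisenberg := ⟨fun a b => ⟨a.x + b.x, a.y + b.y, a.z + b.z + a.y * b.x⟩⟩
instance : One IntHeisenberg := ⟨⟨0, 0, 0⟩⟩
instance : Inv IntHeisenberg := ⟨fun a => ⟨-a.x, -a.y, -a.z + a.y * a.x⟩⟩

@[simp] lemma mul_x (a b : IntHeisenberg) : (a * b).x = a.x + b.x := rfl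
@[simp] lemma mul_y (a b : IntHeisenberg) : (a * b).y = a.y + b.y := rfl
@[simp] lemma mul_z (a b : IntHeisenberg) : (a * b).z = a.z + b.z + a.y * b.x := rfl
@[simp] lemma one_x : (1 : IntHeisenberg).x = 0 := rfl
@[simp] lemma one_y : (1 : IntHeisenberg).y = 0 := rfl
@[simp] lemma one_z : (1 : IntHeisenberg).z = 0 := rfl
@[simp] lemma inv_x (a : IntHeisenberg) : a⁻¹.x = -a.x := rfl
@[simp] lemma inv_y (a : IntHeisenberg) : a⁻¹.y = -a.y := rfl
@[simp] lemma inv_z (a : IntHeisenberg) : a⁻¹.z = -a.z + a.y * a.x := rfl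

instance : Group IntHeisenberg where
  mul_assoc a b c := by ext <;> simp <;> ring
  one_mul a := by ext <;> simp
  mul_one a := by ext <;> simp
  inv_mul_cancel a := by ext <;> simp

def B1 : IntHeisenberg := ⟨1, 0, 0⟩
def B2 : IntHeisenberg := ⟨0, 1, 0⟩
def A : IntHeisenberg := ⟨0, 0, 1⟩

lemma B1_pow (n : ℕ) : B1 ^ n = ⟨n, 0, 0⟩ := by
  induction n with
  | zero => rfl
  | succ n ih => rw [pow_succ, ih]; ext <;> simp [B1]

lemma B2_pow (n : ℕ) : B2 ^ n = ⟨0, n, 0⟩ := by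
  induction n with
  | zero => rfl
  | succ n ih => rw [pow_succ, ih]; ext <;> simp [B2]

lemma A_pow (n : ℕ) : A ^ n = ⟨0, 0, n⟩ := by
  induction n with
  | zero => rfl
  | succ n ih => rw [pow_succ, ih]; ext <;> simp [A]

lemma B2_inv_mul_B1_inv_mul_B2_mul_B1 : B2⁻¹ * B1⁻¹ * B2 * B1 = A := by
  ext <;> simp [B1, B2, A]

lemma B1_inv_mul_A_inv_mul_B1_mul_A : B1⁻¹ * A⁻¹ * B1 * A = 1 := by
  ext <;> simp [B1, A]

lemma B2_inv_mul_A_inv_mul_B2_mul_A : B2⁻¹ * A⁻¹ * B2 * A = 1 := by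
  ext <;> simp [B2, A]

section Quotient

variable (d e₁ e₂ f₁ f₂ : ℕ)

/-- The products `(B1 ^ e₁ * A⁻¹ ^ f₁) ^ u * (B2 ^ e₂ * A⁻¹ ^ f₂) ^ v * A ^ (d * w)` with
`u v w : ℤ`, written out in coordinates; they form a normal subgroup once also `d ∣ e₁`. -/
def relSubgroup (hd₂ : d ∣ e₂) : Subgroup IntHeisenberg where
  carrier := {g | ∃ u v : ℤ, g.x = u * e₁ ∧ g.y = v * e₂ ∧ (d : ℤ) ∣ g.z + u * f₁ + v * f₂}
  one_mem' := ⟨0, 0, by simp⟩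
  mul_mem' := by
    rintro a b ⟨u, v, hax, hay, haz⟩ ⟨u', v', hbx, hby, hbz⟩
    refine ⟨u + u', v + v', by rw [mul_x, hax, hbx]; ring, by rw [mul_y, hay, hby]; ring, ?_⟩
    have : (a * b).z + (u + u') * f₁ + (v + v') * f₂ =
        (a.z + u * f₁ + v * f₂) + (b.z + u' * f₁ + v' * f₂) + v * e₂ * b.x := by
      rw [mul_z, hay]; ring
    rw [this]
    exact dvd_add (dvd_add haz hbz) (((Int.natCast_dvd_natCast.mpr hd₂).mul_left v).mul_right _)
  inv_mem' := by
    rintro a ⟨u, v, hax, hay, haz⟩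
    refine ⟨-u, -v, by simp [hax], by simp [hay], ?_⟩
    have : a⁻¹.z + -u * f₁ + -v * f₂ = -(a.z + u * f₁ + v * f₂) + v * e₂ * a.x := by
      rw [inv_z, hay]; ring
    rw [this]
    exact dvd_add haz.neg_right (((Int.natCast_dvd_natCast.mpr hd₂).mul_left v).mul_right _)

variable {d e₁ e₂ f₁ f₂} (hd₂ : d ∣ e₂)

lemma relSubgroup_normal (hd₁ : d ∣ e₁) : (relSubgroup d e₁ e₂ f₁ f₂ hd₂).Normal where
  conj_mem n := by
    rintro ⟨u, v, hx, hy, hz⟩ g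
    refine ⟨u, v, by simp [hx], by simp [hy], ?_⟩
    have : (g * n * g⁻¹).z + u * f₁ + v * f₂ =
        (n.z + u * f₁ + v * f₂) + g.y * (u * e₁) - g.x * (v * e₂) := by
      simp only [mul_z, mul_y, inv_x, inv_z, hx, hy]; ring
    rw [this]
    exact dvd_sub (dvd_add hz (((Int.natCast_dvd_natCast.mpr hd₁).mul_left u).mul_left _))
      (((Int.natCast_dvd_natCast.mpr hd₂).mul_left v).mul_left _)

lemma A_pow_mem_relSubgroup_iff (he₁ : e₁ ≠ 0) (he₂ : e₂ ≠ 0) (t : ℕ) :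
    A ^ t ∈ relSubgroup d e₁ e₂ f₁ f₂ hd₂ ↔ d ∣ t := by
  refine ⟨fun ⟨u, v, hx, hy, hz⟩ => ?_, fun h => ⟨0, 0, by simp [A_pow], by simp [A_pow], ?_⟩⟩
  obtain rfl : u = 0 := by simpa [A_pow, he₁, eq_comm] using hx
  obtain rfl : v = 0 := by simpa [A_pow, he₂, eq_comm] using hy
  · exact Int.natCast_dvd_natCast.mp (by simpa [A_pow] using hz)
  · simpa [A_pow] using Int.natCast_dvd_natCast.mpr h

lemma orderOf_mk_A [(relSubgroup d e₁ e₂ f₁ f₂ hd₂).Normal] (he₁ : e₁ ≠ 0) (he₂ : e₂ ≠ 0) :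
    orderOf (A : IntHeisenberg ⧸ relSubgroup d e₁ e₂ f₁ f₂ hd₂) = d :=
  Nat.dvd_right_iff_eq.mp fun t => by
    rw [orderOf_dvd_iff_pow_eq_one, ← QuotientGroup.mk_pow, QuotientGroup.eq_one_iff,
      A_pow_mem_relSubgroup_iff hd₂ he₁ he₂]

end Quotient

end IntHeisenberg

namespace GG

open PresentedGroup IntHeisenberg

variable {p m n1 n2 s1 s2 : ℕ}

lemma commutator_pow_eq_one :
    ⁅(of 1 : GG p m n1 n2 s1 s2)⁻¹, (of 0 : GG p m n1 n2 s1 s2)⁻¹⁆ ^ p ^ m = 1 := by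
  have h := one_of_mem (rels := pgRels p m n1 n2 s1 s2) (Set.mem_insert _ _)
  simp only [map_pow, map_mul, map_inv] at h
  rwa [commutatorElement_inv_inv_s8]

lemma of_zero_commute_commutator :
    Commute (of 0 : GG p m n1 n2 s1 s2)
      ⁅(of 1 : GG p m n1 n2 s1 s2)⁻¹, (of 0 : GG p m n1 n2 s1 s2)⁻¹⁆ := by
  have h := one_of_mem (rels := pgRels p m n1 n2 s1 s2)
    (Set.mem_insert_of_mem _ (Set.mem_insert _ _))
  simp only [map_mul, map_inv] at h
  rwa [← Commute.inv_inv_iff, ← commutatorElement_eq_one_iff_commute, commutatorElement_inv_inv_s8,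
    commutatorElement_inv_inv_s8]

lemma of_one_commute_commutator :
    Commute (of 1 : GG p m n1 n2 s1 s2)
      ⁅(of 1 : GG p m n1 n2 s1 s2)⁻¹, (of 0 : GG p m n1 n2 s1 s2)⁻¹⁆ := by
  have h := one_of_mem (rels := pgRels p m n1 n2 s1 s2)
    (Set.mem_insert_of_mem _ (Set.mem_insert_of_mem _ (Set.mem_insert _ _)))
  simp only [map_mul, map_inv] at h
  rwa [← Commute.inv_inv_iff, ← commutatorElement_eq_one_iff_commute, commutatorElement_inv_inv_s8,
    commutatorElement_inv_inv_s8]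

lemma lift_mem_relSubgroup_of_mem_pgRels (h2 : m ≤ n2) : ∀ r ∈ pgRels p m n1 n2 s1 s2,
    FreeGroup.lift ![B1, B2] r ∈
      relSubgroup (p ^ m) (p ^ n1) (p ^ n2) (p ^ s1) (p ^ s2) (pow_dvd_pow p h2) := by
  simp only [pgRels, Set.mem_insert_iff, Set.mem_singleton_iff, forall_eq_or_imp, forall_eq,
    map_mul, map_inv, map_pow, FreeGroup.lift_apply_of, Matrix.cons_val_zero, Matrix.cons_val_one,
    B2_inv_mul_B1_inv_mul_B2_mul_B1, B1_inv_mul_A_inv_mul_B1_mul_A, B2_inv_mul_A_inv_mul_B2_mul_A]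
  refine ⟨⟨0, 0, ?_⟩, one_mem _, one_mem _, ⟨1, 0, ?_⟩, ⟨0, 1, ?_⟩⟩ <;>
    simp [B1_pow, B2_pow, A_pow]

lemma orderOf_commutator (hp : p ≠ 0) (h1 : m ≤ n1) (h2 : m ≤ n2) :
    orderOf ⁅(of 1 : GG p m n1 n2 s1 s2)⁻¹, (of 0 : GG p m n1 n2 s1 s2)⁻¹⁆ = p ^ m := by
  set N := relSubgroup (p ^ m) (p ^ n1) (p ^ n2) (p ^ s1) (p ^ s2) (pow_dvd_pow p h2)
  have := relSubgroup_normal (f₁ := p ^ s1) (f₂ := p ^ s2) (pow_dvd_pow p h2) (pow_dvd_pow p h1)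
  have hrels : ∀ r ∈ pgRels p m n1 n2 s1 s2,
      FreeGroup.lift (QuotientGroup.mk' N ∘ ![B1, B2]) r = 1 := fun r hr => by
    rw [← FreeGroup.lift_unique (f := QuotientGroup.mk' N ∘ ![B1, B2])
      ((QuotientGroup.mk' N).comp (FreeGroup.lift ![B1, B2])) fun _ => by simp]
    exact (QuotientGroup.eq_one_iff _).mpr (lift_mem_relSubgroup_of_mem_pgRels h2 r hr)
  refine Nat.dvd_antisymm (orderOf_dvd_of_pow_eq_one commutator_pow_eq_one) ?_
  have h := orderOf_map_dvd (toGroup hrels) ⁅(of 1 : GG p m n1 n2 s1 s2)⁻¹, (of 0)⁻¹⁆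
  simp only [map_commutatorElement, map_inv, toGroup.of, Function.comp_apply, Matrix.cons_val_zero,
    Matrix.cons_val_one] at h
  rwa [← map_inv, ← map_inv, ← map_commutatorElement, commutatorElement_inv_inv_s8,
    B2_inv_mul_B1_inv_mul_B2_mul_B1, QuotientGroup.mk'_apply,
    orderOf_mk_A _ (pow_ne_zero _ hp) (pow_ne_zero _ hp)] at h

end GG

/-- For an admissible tuple, the commutator subgroup of `G = G_p(m,n1,n2,s1,s2)` is the
cyclic subgroup generated by `[b2,b1] = b2⁻¹ * b1⁻¹ * b2 * b1` and has order `p^m`. -/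
theorem commutator_subgroup_of_presented_group
    (p : ℕ) (hp : p.Prime) (m n1 n2 s1 s2 : ℕ) (h : Admissible p m n1 n2 s1 s2) :
    let b1 : GG p m n1 n2 s1 s2 := PresentedGroup.of 0
    let b2 : GG p m n1 n2 s1 s2 := PresentedGroup.of 1
    commutator (GG p m n1 n2 s1 s2) = Subgroup.closure {b2⁻¹ * b1⁻¹ * b2 * b1} ∧
    Nat.card ↥(commutator (GG p m n1 n2 s1 s2)) = p ^ m := by
  obtain ⟨⟨-, -, -, hmn2, hn2n1⟩, -⟩ := h
  intro b1 b2
  have hgen : Subgroup.closure {b2⁻¹, b1⁻¹} = ⊤ := by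
    rw [← Set.inv_singleton, ← Set.inv_insert, Subgroup.closure_inv, Set.pair_comm]
    exact PresentedGroup.closure_of_zero_of_one_eq_top _
  have hcomm : commutator (GG p m n1 n2 s1 s2) = Subgroup.closure {b2⁻¹ * b1⁻¹ * b2 * b1} := by
    rw [← commutatorElement_inv_inv_s8]
    exact Subgroup.commutator_eq_closure_commutatorElement hgen
      GG.of_one_commute_commutator.inv_left GG.of_zero_commute_commutator.inv_left
  refine ⟨hcomm, ?_⟩
  rw [hcomm, ← commutatorElement_inv_inv_s8, ← Subgroup.zpowers_eq_closure, Nat.card_zpowers,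
    GG.orderOf_commutator hp.ne_zero (hmn2.trans hn2n1) hmn2]
end

section
/- Let p be a prime and let G be a finite p-group of nilpotency class at most 2. Then M_1(G) = G; for every natural number k and every n with p^k < n ≤ 2p^k, the n-th dimension subgroup M_n(G) equals the subgroup generated by the p^k-th powers of elements of G' together with the p^(k+1)-st powers of elements of G; and for every n with 2p^k < n ≤ p^(k+1), M_n(G) equals the subgroup generated by the p^(k+1)-st powers of elements of G. -/
/-- `subgroupPow H u` is the subgroup generated by the `u`-th powers of elements of `H`. -/
def subgroupPow {G : Type*} [Group G] (H : Subgroup G) (u : ℕ) : Subgroup G :=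
  Subgroup.closure {x : G | ∃ h ∈ H, x = h ^ u}

/-- The `n`-th dimension subgroup `M_n(G) = ∏_{i·p^j ≥ n, i ≥ 1} γ_i(G)^(p^j)`, where
`γ_i(G)` is the `i`-th term of the lower central series (`γ_1(G) = G`). -/
def dimensionSubgroup (p : ℕ) (G : Type*) [Group G] (n : ℕ) : Subgroup G :=
  ⨆ (i : ℕ) (j : ℕ) (_ : 1 ≤ i ∧ n ≤ i * p ^ j),
    subgroupPow ((⊤ : Subgroup G).lowerCentralSeries (i - 1)) (p ^ j)

/-!
In class at most two `γ_3(G) = 1`, so only the terms `G^(p^j)` (`n ≤ p^j`) and `(G')^(p^j)`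
(`n ≤ 2p^j`) of `M_n(G)` survive. Both shrink as `j` grows, so `M_n(G)` is generated by the two
terms with the least admissible `j`: for `p^k < n ≤ 2p^k` these are `G^(p^(k+1))` and
`(G')^(p^k)`; for `2p^k < n ≤ p^(k+1)` they are `G^(p^(k+1))` and `(G')^(p^(k+1))`, which lies
in the former.
-/

namespace Nat

variable {p : ℕ}

lemma two_mul_pow_le_pow_succ (hp : 2 ≤ p) (k : ℕ) : 2 * p ^ k ≤ p ^ (k + 1) := by
  rw [pow_succ']
  exact Nat.mul_le_mul_right _ hp

lemma le_of_pow_lt_two_mul_pow {j k : ℕ} (hp : 2 ≤ p) (h : p ^ k < 2 * p ^ j) : k ≤ j := by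
  by_contra! hjk
  have : p ^ (j + 1) ≤ p ^ k := Nat.pow_le_pow_right (by omega) hjk
  have := two_mul_pow_le_pow_succ hp j
  omega

end Nat

section SubgroupPow

variable {G : Type*} [Group G]

lemma subgroupPow_mono {H K : Subgroup G} (h : H ≤ K) (u : ℕ) :
    subgroupPow H u ≤ subgroupPow K u :=
  Subgroup.closure_mono (by rintro x ⟨a, ha, rfl⟩; exact ⟨a, h ha, rfl⟩)

lemma subgroupPow_le_self (H : Subgroup G) (u : ℕ) : subgroupPow H u ≤ H := by
  rw [subgroupPow, Subgroup.closure_le]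
  rintro x ⟨a, ha, rfl⟩
  exact H.pow_mem ha u

lemma subgroupPow_one (H : Subgroup G) : subgroupPow H 1 = H := by
  simp [subgroupPow]

lemma subgroupPow_le_of_dvd (H : Subgroup G) {u v : ℕ} (h : u ∣ v) :
    subgroupPow H v ≤ subgroupPow H u := by
  obtain ⟨w, rfl⟩ := h
  rw [subgroupPow, Subgroup.closure_le]
  rintro x ⟨a, ha, rfl⟩
  rw [mul_comm, pow_mul]
  exact Subgroup.subset_closure ⟨a ^ w, H.pow_mem ha w, rfl⟩

lemma subgroupPow_pow_le_pow (H : Subgroup G) (p : ℕ) {j k : ℕ} (h : k ≤ j) :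
    subgroupPow H (p ^ j) ≤ subgroupPow H (p ^ k) :=
  subgroupPow_le_of_dvd H (pow_dvd_pow p h)

end SubgroupPow

lemma Subgroup.lowerCentralSeries_two_eq_bot {G : Type*} [Group G]
    (hclass : _root_.commutator G ≤ Subgroup.center G) :
    (⊤ : Subgroup G).lowerCentralSeries 2 = ⊥ := by
  rw [Subgroup.lowerCentralSeries_succ, Subgroup.top_lowerCentralSeries_one,
    Subgroup.commutator_eq_bot_iff_le_centralizer, Subgroup.coe_top,
    Subgroup.centralizer_univ]
  exact hclass

namespace dimensionSubgroup

variable {p : ℕ} {G : Type*} [Group G] {n : ℕ}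

lemma subgroupPow_top_le {j : ℕ} (h : n ≤ p ^ j) :
    subgroupPow ⊤ (p ^ j) ≤ dimensionSubgroup p G n :=
  le_iSup_of_le 1 <| le_iSup_of_le j <| le_iSup_of_le ⟨le_rfl, by omega⟩ le_rfl

lemma subgroupPow_commutator_le {j : ℕ} (h : n ≤ 2 * p ^ j) :
    subgroupPow (commutator G) (p ^ j) ≤ dimensionSubgroup p G n := by
  rw [← Subgroup.top_lowerCentralSeries_one]
  exact le_iSup_of_le 2 <| le_iSup_of_le j <| le_iSup_of_le ⟨by omega, h⟩ le_rfl

lemma le_of_commutator_le_center (hclass : commutator G ≤ Subgroup.center G)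
    {K : Subgroup G} (htop : ∀ j, n ≤ p ^ j → subgroupPow ⊤ (p ^ j) ≤ K)
    (hcomm : ∀ j, n ≤ 2 * p ^ j → subgroupPow (commutator G) (p ^ j) ≤ K) :
    dimensionSubgroup p G n ≤ K := by
  refine iSup_le fun i => iSup_le fun j => iSup_le fun ⟨hi, hij⟩ => ?_
  rcases i with _ | _ | _ | i
  · omega
  · exact htop j (by simpa using hij)
  · rw [Nat.add_sub_cancel, Subgroup.top_lowerCentralSeries_one]
    exact hcomm j hij
  · have hγ : (⊤ : Subgroup G).lowerCentralSeries (i + 2) = ⊥ :=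
      eq_bot_iff.mpr <| (Subgroup.lowerCentralSeries_antitone ⊤ (by omega)).trans
        (Subgroup.lowerCentralSeries_two_eq_bot hclass).le
    rw [Nat.add_sub_cancel, hγ]
    exact (subgroupPow_le_self ⊥ _).trans bot_le

end dimensionSubgroup

theorem dimension_subgroups_of_class_two_group_general
    (p : ℕ) (hp : p.Prime) (G : Type*) [Group G]
    (hclass : commutator G ≤ Subgroup.center G) :
    dimensionSubgroup p G 1 = ⊤ ∧
    (∀ k n : ℕ, p ^ k < n → n ≤ 2 * p ^ k →
      dimensionSubgroup p G n =
        subgroupPow (commutator G) (p ^ k) ⊔ subgroupPow ⊤ (p ^ (k + 1))) ∧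
    (∀ k n : ℕ, 2 * p ^ k < n → n ≤ p ^ (k + 1) →
      dimensionSubgroup p G n = subgroupPow ⊤ (p ^ (k + 1))) := by
  have hp2 := hp.two_le
  have lt_of_pow_lt_pow {k j : ℕ} (h : p ^ k < p ^ j) : k < j :=
    (Nat.pow_lt_pow_iff_right hp.one_lt).mp h
  refine ⟨?_, fun k n hkn hnk => ?_, fun k n hkn hnk => ?_⟩
  · simpa [subgroupPow_one] using
      dimensionSubgroup.subgroupPow_top_le (p := p) (G := G) (j := 0) le_rfl
  · have hk := Nat.two_mul_pow_le_pow_succ hp2 k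
    refine le_antisymm ?_ (sup_le (dimensionSubgroup.subgroupPow_commutator_le hnk)
      (dimensionSubgroup.subgroupPow_top_le (by omega)))
    refine dimensionSubgroup.le_of_commutator_le_center hclass (fun j hj => ?_) (fun j hj => ?_)
    · exact le_sup_of_le_right (subgroupPow_pow_le_pow _ p (lt_of_pow_lt_pow (by omega)))
    · exact le_sup_of_le_left
        (subgroupPow_pow_le_pow _ p (Nat.le_of_pow_lt_two_mul_pow hp2 (by omega)))
  · refine le_antisymm ?_ (dimensionSubgroup.subgroupPow_top_le hnk)
    refine dimensionSubgroup.le_of_commutator_le_center hclass (fun j hj => ?_) (fun j hj => ?_)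
    · exact subgroupPow_pow_le_pow _ p (lt_of_pow_lt_pow (by omega))
    · exact (subgroupPow_pow_le_pow _ p (lt_of_pow_lt_pow (by omega))).trans
        (subgroupPow_mono le_top _)

/-- For a finite `p`-group `G` of nilpotency class at most 2:
`M_1(G) = G`; for `p^k < n ≤ 2p^k`, `M_n(G) = (G')^(p^k) · G^(p^(k+1))`; and for
`2p^k < n ≤ p^(k+1)`, `M_n(G) = G^(p^(k+1))`. -/
theorem dimension_subgroups_of_class_two_group
    (p : ℕ) (hp : p.Prime) (G : Type*) [Group G] [Finite G] (hGp : IsPGroup p G)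
    (hclass : commutator G ≤ Subgroup.center G) :
    dimensionSubgroup p G 1 = ⊤ ∧
    (∀ k n : ℕ, p ^ k < n → n ≤ 2 * p ^ k →
      dimensionSubgroup p G n =
        subgroupPow (commutator G) (p ^ k) ⊔ subgroupPow ⊤ (p ^ (k + 1))) ∧
    (∀ k n : ℕ, 2 * p ^ k < n → n ≤ p ^ (k + 1) →
      dimensionSubgroup p G n = subgroupPow ⊤ (p ^ (k + 1))) :=
  dimension_subgroups_of_class_two_group_general p hp G hclass
end

section
/- Let p be an odd prime and (m,n1,n2,s1,s2) an admissible tuple for p, and let G = G_p(m,n1,n2,s1,s2) with generators b1, b2 and a = [b2,b1]. Then s2 is the least natural number i such that a^(p^i) belongs to the subgroup of G generated by a^(p^(i+1)), b1^(p^(i+1)) and b2^(p^(i+1)). -/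
/-- `⟨a, b, c⟩` stands for the unitriangular matrix `!![1, b, c; 0, 1, a; 0, 0, 1]`. -/
@[ext]
structure Heisenberg (R : Type*) [CommRing R] where
  a : R
  b : R
  c : R

namespace Heisenberg

variable {R : Type*} [CommRing R]

instance : Mul (Heisenberg R) := ⟨fun g h => ⟨g.a + h.a, g.b + h.b, g.c + h.c + h.a * g.b⟩⟩
instance : One (Heisenberg R) := ⟨⟨0, 0, 0⟩⟩
instance : Inv (Heisenberg R) := ⟨fun g => ⟨-g.a, -g.b, -g.c + g.a * g.b⟩⟩

@[simp] lemma mul_a (g h : Heisenberg R) : (g * h).a = g.a + h.a := rfl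
@[simp] lemma mul_b (g h : Heisenberg R) : (g * h).b = g.b + h.b := rfl
@[simp] lemma mul_c (g h : Heisenberg R) : (g * h).c = g.c + h.c + h.a * g.b := rfl
@[simp] lemma one_a : (1 : Heisenberg R).a = 0 := rfl
@[simp] lemma one_b : (1 : Heisenberg R).b = 0 := rfl
@[simp] lemma one_c : (1 : Heisenberg R).c = 0 := rfl
@[simp] lemma inv_a (g : Heisenberg R) : g⁻¹.a = -g.a := rfl
@[simp] lemma inv_b (g : Heisenberg R) : g⁻¹.b = -g.b := rfl
@[simp] lemma inv_c (g : Heisenberg R) : g⁻¹.c = -g.c + g.a * g.b := rfl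

instance : Group (Heisenberg R) where
  mul_assoc _ _ _ := by ext <;> simp <;> ring
  one_mul _ := by ext <;> simp
  mul_one _ := by ext <;> simp
  inv_mul_cancel _ := by ext <;> simp

def x (r : R) : Heisenberg R := ⟨r, 0, 0⟩
def y (r : R) : Heisenberg R := ⟨0, r, 0⟩
def z (r : R) : Heisenberg R := ⟨0, 0, r⟩

@[simp] lemma x_zero : x (0 : R) = 1 := rfl
@[simp] lemma y_zero : y (0 : R) = 1 := rfl
@[simp] lemma z_zero : z (0 : R) = 1 := rfl

@[simp] lemma z_eq_one_iff {r : R} : z r = 1 ↔ r = 0 := by simp [z, Heisenberg.ext_iff]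

lemma x_pow (r : R) (n : ℕ) : x r ^ n = x (n * r) := by
  induction n with
  | zero => simp
  | succ k ih => rw [pow_succ, ih]; ext <;> simp [x, add_one_mul]

lemma y_pow (r : R) (n : ℕ) : y r ^ n = y (n * r) := by
  induction n with
  | zero => simp
  | succ k ih => rw [pow_succ, ih]; ext <;> simp [y, add_one_mul]

lemma z_pow (r : R) (n : ℕ) : z r ^ n = z (n * r) := by
  induction n with
  | zero => simp
  | succ k ih => rw [pow_succ, ih]; ext <;> simp [z, add_one_mul]

lemma y_inv_mul_x_inv_mul_y_mul_x (r s : R) : (y s)⁻¹ * (x r)⁻¹ * y s * x r = z (r * s) := by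
  ext <;> simp [x, y, z]

lemma commute_z (r : R) (g : Heisenberg R) : Commute (z r) g := by
  ext <;> simp [z, add_comm]

end Heisenberg

namespace GG

variable {p m n1 n2 s1 s2 : ℕ}

def b₁ : GG p m n1 n2 s1 s2 := PresentedGroup.of 0
def b₂ : GG p m n1 n2 s1 s2 := PresentedGroup.of 1
def a : GG p m n1 n2 s1 s2 := b₂⁻¹ * b₁⁻¹ * b₂ * b₁

lemma mk_commutator :
    PresentedGroup.mk (pgRels p m n1 n2 s1 s2)
      ((FreeGroup.of 1)⁻¹ * (FreeGroup.of 0)⁻¹ * FreeGroup.of 1 * FreeGroup.of 0) = a := by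
  simp only [map_mul, map_inv]
  rfl

lemma a_pow_p_pow_m : (a : GG p m n1 n2 s1 s2) ^ p ^ m = 1 := by
  rw [← mk_commutator, ← map_pow]
  exact PresentedGroup.one_of_mem (by simp [pgRels])

lemma b₂_pow_p_pow_n2 : (b₂ : GG p m n1 n2 s1 s2) ^ p ^ n2 = a ^ p ^ s2 := by
  rw [← mk_commutator, ← map_pow]
  exact PresentedGroup.mk_eq_mk_of_mul_inv_mem (by simp [pgRels])

lemma a_pow_p_pow_s2_mem_closure (hs2m : s2 ≤ m) (hmn2 : m ≤ n2) :
    (a : GG p m n1 n2 s1 s2) ^ p ^ s2 ∈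
      Subgroup.closure {a ^ p ^ (s2 + 1), b₁ ^ p ^ (s2 + 1), b₂ ^ p ^ (s2 + 1)} := by
  rcases (hs2m.trans hmn2).lt_or_eq with hlt | heq
  · have : (b₂ : GG p m n1 n2 s1 s2) ^ p ^ n2 = (b₂ ^ p ^ (s2 + 1)) ^ p ^ (n2 - (s2 + 1)) := by
      rw [← pow_mul, ← pow_add, Nat.add_sub_cancel' hlt]
    rw [← b₂_pow_p_pow_n2, this]
    exact pow_mem (Subgroup.subset_closure (by simp)) _
  · rw [show s2 = m by omega, a_pow_p_pow_m]
    exact one_mem _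

section ToHeisenberg

variable {R : Type*} [CommRing R] (hm : (p : R) ^ m = 0) (hn1 : (p : R) ^ n1 = 0)
  (hn2 : (p : R) ^ n2 = 0) (hs1 : (p : R) ^ s1 = 0) (hs2 : (p : R) ^ s2 = 0)

def toHeisenberg : GG p m n1 n2 s1 s2 →* Heisenberg R :=
  PresentedGroup.toGroup (f := ![Heisenberg.x 1, Heisenberg.y 1]) <| by
    have hlift : FreeGroup.lift ![Heisenberg.x 1, Heisenberg.y 1]
        ((FreeGroup.of 1)⁻¹ * (FreeGroup.of 0)⁻¹ * FreeGroup.of 1 * FreeGroup.of 0) =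
          Heisenberg.z (1 : R) := by
      simpa using Heisenberg.y_inv_mul_x_inv_mul_y_mul_x (1 : R) 1
    simp only [pgRels, Set.mem_insert_iff, Set.mem_singleton_iff]
    rintro r (rfl | rfl | rfl | rfl | rfl) <;>
      simp only [map_mul, map_inv, map_pow, hlift, FreeGroup.lift_apply_of] <;>
      simp [Heisenberg.x_pow, Heisenberg.y_pow, Heisenberg.z_pow, hm, hn1, hn2, hs1, hs2, mul_assoc,
        ← (Heisenberg.commute_z (1 : R) (Heisenberg.x 1)).eq,
        ← (Heisenberg.commute_z (1 : R) (Heisenberg.y 1)).eq]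

@[simp] lemma toHeisenberg_b₁ : toHeisenberg hm hn1 hn2 hs1 hs2 b₁ = Heisenberg.x 1 :=
  PresentedGroup.toGroup.of _

@[simp] lemma toHeisenberg_b₂ : toHeisenberg hm hn1 hn2 hs1 hs2 b₂ = Heisenberg.y 1 :=
  PresentedGroup.toGroup.of _

@[simp] lemma toHeisenberg_a : toHeisenberg hm hn1 hn2 hs1 hs2 a = Heisenberg.z 1 := by
  simp [a, Heisenberg.y_inv_mul_x_inv_mul_y_mul_x]

end ToHeisenberg

lemma a_pow_p_pow_notMem_closure {i : ℕ} (hp : 1 < p) (hm : i < m) (hn1 : i < n1) (hn2 : i < n2)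
    (hs1 : i < s1) (hs2 : i < s2) :
    (a : GG p m n1 n2 s1 s2) ^ p ^ i ∉
      Subgroup.closure {a ^ p ^ (i + 1), b₁ ^ p ^ (i + 1), b₂ ^ p ^ (i + 1)} := by
  have hzero {e : ℕ} (he : i < e) : (p : ZMod (p ^ (i + 1))) ^ e = 0 := by
    rw [← Nat.cast_pow, ZMod.natCast_eq_zero_iff]
    exact pow_dvd_pow p he
  set φ := toHeisenberg (hzero hm) (hzero hn1) (hzero hn2) (hzero hs1) (hzero hs2)
  have hker : Subgroup.closure {a ^ p ^ (i + 1), b₁ ^ p ^ (i + 1), b₂ ^ p ^ (i + 1)} ≤ φ.ker := by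
    rw [Subgroup.closure_le]
    rintro g (rfl | rfl | rfl) <;>
      simp [φ, Heisenberg.x_pow, Heisenberg.y_pow, Heisenberg.z_pow]
  intro hmem
  have : ((p ^ i : ℕ) : ZMod (p ^ (i + 1))) = 0 := by
    simpa [φ, Heisenberg.z_pow] using hker hmem
  rw [ZMod.natCast_eq_zero_iff, Nat.pow_dvd_pow_iff_le_right hp] at this
  omega

end GG

/-- For an odd prime `p` and an admissible tuple, in `G = G_p(m,n1,n2,s1,s2)` with
`a = [b2,b1]`, the parameter `s2` is the least natural number `i` such that
`a^(p^i)` lies in the subgroup generated by `a^(p^(i+1))`, `b1^(p^(i+1))`, `b2^(p^(i+1))`. -/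
theorem s2_least_odd_prime
    (p : ℕ) (hp : p.Prime) (hodd : p ≠ 2) (m n1 n2 s1 s2 : ℕ)
    (h : Admissible p m n1 n2 s1 s2) :
    let b1 : GG p m n1 n2 s1 s2 := PresentedGroup.of 0
    let b2 : GG p m n1 n2 s1 s2 := PresentedGroup.of 1
    let a : GG p m n1 n2 s1 s2 := b2⁻¹ * b1⁻¹ * b2 * b1
    IsLeast {i : ℕ |
      a ^ p ^ i ∈ Subgroup.closure {a ^ p ^ (i + 1), b1 ^ p ^ (i + 1), b2 ^ p ^ (i + 1)}} s2 := by
  intro b1 b2 a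
  obtain ⟨⟨-, -, hs2m, hmn2, hn2n1⟩, -, -, hA4⟩ := h
  have hs2s1 : s2 ≤ s1 := hA4.resolve_right fun h => hodd h.1
  refine ⟨GG.a_pow_p_pow_s2_mem_closure hs2m hmn2, fun i hi => ?_⟩
  by_contra! hlt
  exact GG.a_pow_p_pow_notMem_closure hp.one_lt (by omega) (by omega) (by omega) (by omega) hlt hi
end
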